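/- arXiv:1603.05280 — 8 statements merged into one kernel-verified Lean document; each statement's English description precedes it below -/
import Mathlib

section
/- Let R > 0 and let f : [0, R) → ℝ be twice continuously differentiable with f(0) = 0, f'(0) = −1, and f' convex and strictly increasing. Set ν := sup{t ∈ [0, R) : f'(t) < 0}, and for t ∈ [0, ν) define the Newton iteration map n_f(t) := t − f(t)/f'(t). Then the function (0, ν) ∋ t ↦ |n_f(t)|/t² is strictly increasing, and |n_f(t)|/t² ≤ f''(t)/(2|f'(t)|) for all t ∈ (0, ν). -/
/-!
Let `F(t) = t f'(t) - f(t)` (`newtonGap f f' t`), so that `|n_f(t)| / t² = (F(t) / t²) / |f'(t)|`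
once `F(t) ≥ 0`. Since `F' = t f''` and `f''` is nondecreasing (`f'` is convex), Cauchy's mean value
theorem against `t²` gives `F(t) ≤ t² f''(t) / 2`, which is the claimed bound and also makes `F / t²`
nondecreasing. The mean value theorem and the strict monotonicity of `f'` give `F > 0`, while
`1 / |f'|` is positive and strictly increasing on `(0, ν)`, where `f' < 0`; hence so is the quotient.
-/

open Set

lemma Real.exists_lt_of_lt_sSup_of_nonneg {s : Set ℝ} {t : ℝ} (ht₀ : 0 ≤ t) (ht : t < sSup s) :
    ∃ u ∈ s, t < u := by
  rcases s.eq_empty_or_nonempty with rfl | hs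
  · rw [Real.sSup_empty] at ht
    exact absurd ht ht₀.not_gt
  · exact exists_lt_of_lt_csSup hs ht

lemma MonotoneOn.div_strictAntiOn {a b : ℝ → ℝ} {s : Set ℝ} (ha : MonotoneOn a s)
    (hb : StrictAntiOn b s) (ha₀ : ∀ x ∈ s, 0 < a x) (hb₀ : ∀ x ∈ s, 0 < b x) :
    StrictMonoOn (fun x => a x / b x) s := fun x hx y hy hxy =>
  calc a x / b x < a x / b y := div_lt_div_of_pos_left (ha₀ x hx) (hb₀ y hy) (hb hx hy hxy)
    _ ≤ a y / b y := div_le_div_of_nonneg_right (ha hx hy hxy.le) (hb₀ y hy).le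

lemma abs_sub_div_div_sq {t a b : ℝ} (hb : b ≠ 0) (hab : a ≤ t * b) :
    |t - a / b| / t ^ 2 = (t * b - a) / t ^ 2 / |b| := by
  rw [show t - a / b = (t * b - a) / b by field_simp, abs_div, abs_of_nonneg (sub_nonneg.2 hab),
    div_right_comm]

section NewtonGap

variable {f f' f'' : ℝ → ℝ} {R : ℝ}

lemma hasDerivAt_of_forall_hasDerivWithinAt_Ico
    (hf : ∀ t ∈ Ico (0 : ℝ) R, HasDerivWithinAt f (f' t) (Ico 0 R) t) {t : ℝ} (ht : t ∈ Ioo 0 R) :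
    HasDerivAt f (f' t) t :=
  (hf t (Ioo_subset_Ico_self ht)).hasDerivAt (Ico_mem_nhds ht.1 ht.2)

lemma continuousOn_Icc_of_forall_hasDerivWithinAt_Ico
    (hf : ∀ t ∈ Ico (0 : ℝ) R, HasDerivWithinAt f (f' t) (Ico 0 R) t) {t : ℝ} (ht : t < R) :
    ContinuousOn f (Icc 0 t) :=
  fun s hs => ((hf s ⟨hs.1, hs.2.trans_lt ht⟩).continuousWithinAt).mono (Icc_subset_Ico_right ht)

lemma ConvexOn.monotoneOn_Ioo_of_forall_hasDerivWithinAt_Ico (hconv : ConvexOn ℝ (Ico 0 R) f')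
    (hf' : ∀ t ∈ Ico (0 : ℝ) R, HasDerivWithinAt f' (f'' t) (Ico 0 R) t) :
    MonotoneOn f'' (Ioo 0 R) := by
  have hd t (ht : t ∈ Ioo 0 R) := hasDerivAt_of_forall_hasDerivWithinAt_Ico hf' ht
  exact ((hconv.subset Ioo_subset_Ico_self (convex_Ioo 0 R)).monotoneOn_deriv
    fun t ht => (hd t ht).differentiableAt).congr fun t ht => (hd t ht).deriv

def newtonGap (f f' : ℝ → ℝ) (t : ℝ) : ℝ := t * f' t - f t

lemma newtonGap_pos
    (hf : ∀ t ∈ Ico (0 : ℝ) R, HasDerivWithinAt f (f' t) (Ico 0 R) t) (hf₀ : f 0 = 0)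
    (hmono : StrictMonoOn f' (Ico 0 R)) {t : ℝ} (ht : t ∈ Ioo 0 R) : 0 < newtonGap f f' t := by
  obtain ⟨c, hc, hslope⟩ := exists_hasDerivAt_eq_slope f f' ht.1
    (continuousOn_Icc_of_forall_hasDerivWithinAt_Ico hf ht.2)
    fun x hx => hasDerivAt_of_forall_hasDerivWithinAt_Ico hf ⟨hx.1, hx.2.trans ht.2⟩
  rw [hf₀, sub_zero, sub_zero, eq_div_iff ht.1.ne'] at hslope
  rw [newtonGap, sub_pos, ← hslope, mul_comm]
  exact mul_lt_mul_of_pos_left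
    (hmono ⟨hc.1.le, hc.2.trans ht.2⟩ (Ioo_subset_Ico_self ht) hc.2) ht.1

variable (hf : ∀ t ∈ Ico (0 : ℝ) R, HasDerivWithinAt f (f' t) (Ico 0 R) t)
  (hf' : ∀ t ∈ Ico (0 : ℝ) R, HasDerivWithinAt f' (f'' t) (Ico 0 R) t)
include hf hf'

lemma hasDerivAt_newtonGap {t : ℝ} (ht : t ∈ Ioo 0 R) :
    HasDerivAt (newtonGap f f') (t * f'' t) t :=
  (((hasDerivAt_id t).mul (hasDerivAt_of_forall_hasDerivWithinAt_Ico hf' ht)).sub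
    (hasDerivAt_of_forall_hasDerivWithinAt_Ico hf ht)).congr_deriv (by simp)

lemma continuousOn_Icc_newtonGap {t : ℝ} (ht : t < R) : ContinuousOn (newtonGap f f') (Icc 0 t) :=
  (continuousOn_id.mul (continuousOn_Icc_of_forall_hasDerivWithinAt_Ico hf' ht)).sub
    (continuousOn_Icc_of_forall_hasDerivWithinAt_Ico hf ht)

lemma newtonGap_le (hf₀ : f 0 = 0) (hmono : MonotoneOn f'' (Ioo 0 R)) {t : ℝ}
    (ht : t ∈ Ioo 0 R) : newtonGap f f' t ≤ t ^ 2 * f'' t / 2 := by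
  obtain ⟨c, hc, hratio⟩ := exists_ratio_hasDerivAt_eq_ratio_slope (newtonGap f f')
    (fun s => s * f'' s) ht.1 (continuousOn_Icc_newtonGap hf hf' ht.2)
    (fun x hx => hasDerivAt_newtonGap hf hf' ⟨hx.1, hx.2.trans ht.2⟩)
    (fun s => s ^ 2) (fun s => 2 * s) (continuous_pow 2).continuousOn
    fun x _ => by simpa using hasDerivAt_pow 2 x
  have hgap : newtonGap f f' t = t ^ 2 * f'' c / 2 := by
    refine mul_left_cancel₀ hc.1.ne' ?_
    simp only [newtonGap] at hratio ⊢
    linear_combination (-1 / 2 : ℝ) * hratio - c * hf₀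
  rw [hgap]
  gcongr
  exact hmono ⟨hc.1, hc.2.trans ht.2⟩ ht hc.2.le

lemma monotoneOn_newtonGap_div_sq (hf₀ : f 0 = 0) (hmono : MonotoneOn f'' (Ioo 0 R)) :
    MonotoneOn (fun t => newtonGap f f' t / t ^ 2) (Ioo 0 R) := by
  have hd : ∀ t ∈ Ioo 0 R, HasDerivAt (fun t => newtonGap f f' t / t ^ 2)
      (t * (t ^ 2 * f'' t - 2 * newtonGap f f' t) / (t ^ 2) ^ 2) t := fun t ht => by
    refine ((hasDerivAt_newtonGap hf hf' ht).div (hasDerivAt_pow 2 t)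
      (pow_ne_zero 2 ht.1.ne')).congr_deriv ?_
    push_cast
    ring
  refine monotoneOn_of_deriv_nonneg (convex_Ioo 0 R)
    (fun t ht => (hd t ht).continuousAt.continuousWithinAt) (fun t ht => ?_) (fun t ht => ?_) <;>
    rw [interior_Ioo] at ht
  · exact (hd t ht).differentiableAt.differentiableWithinAt
  · rw [(hd t ht).deriv]
    have := newtonGap_le hf hf' hf₀ hmono ht
    exact div_nonneg (mul_nonneg ht.1.le (by linarith)) (by positivity)

end NewtonGap

theorem newton_map_ratio_strict_mono_general (R : ℝ)
    (f f' f'' : ℝ → ℝ)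
    (hfd1 : ∀ t ∈ Set.Ico (0 : ℝ) R, HasDerivWithinAt f (f' t) (Set.Ico (0 : ℝ) R) t)
    (hfd2 : ∀ t ∈ Set.Ico (0 : ℝ) R, HasDerivWithinAt f' (f'' t) (Set.Ico (0 : ℝ) R) t)
    (hf0 : f 0 = 0)
    (hfconv : ConvexOn ℝ (Set.Ico (0 : ℝ) R) f')
    (hfmono : StrictMonoOn f' (Set.Ico (0 : ℝ) R))
    (ν : ℝ) (hν : ν = sSup {u : ℝ | u ∈ Set.Ico (0 : ℝ) R ∧ f' u < 0})
    :
    StrictMonoOn (fun t : ℝ => |t - f t / f' t| / t ^ 2) (Set.Ioo 0 ν) ∧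
      ∀ t ∈ Set.Ioo (0 : ℝ) ν, |t - f t / f' t| / t ^ 2 ≤ f'' t / (2 * |f' t|) := by
  have hν_spec : ∀ t ∈ Ioo 0 ν, t ∈ Ioo 0 R ∧ f' t < 0 := fun t ht => by
    obtain ⟨u, ⟨huR, hu⟩, htu⟩ := Real.exists_lt_of_lt_sSup_of_nonneg ht.1.le (hν ▸ ht.2)
    exact ⟨⟨ht.1, htu.trans huR.2⟩, (hfmono ⟨ht.1.le, htu.trans huR.2⟩ huR htu).trans hu⟩
  have hgap t (ht : t ∈ Ioo 0 ν) := newtonGap_pos hfd1 hf0 hfmono (hν_spec t ht).1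
  have hratio : EqOn (fun t => |t - f t / f' t| / t ^ 2)
      (fun t => newtonGap f f' t / t ^ 2 / |f' t|) (Ioo 0 ν) := fun t ht =>
    abs_sub_div_div_sq (hν_spec t ht).2.ne (sub_pos.1 (hgap t ht)).le
  have hf''mono := hfconv.monotoneOn_Ioo_of_forall_hasDerivWithinAt_Ico hfd2
  refine ⟨StrictMonoOn.congr ?_ hratio.symm, fun t ht => ?_⟩
  · refine ((monotoneOn_newtonGap_div_sq hfd1 hfd2 hf0 hf''mono).mono
      fun t ht => (hν_spec t ht).1).div_strictAntiOn (fun x hx y hy hxy => ?_)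
      (fun t ht => div_pos (hgap t ht) (pow_pos ht.1 2)) fun t ht => abs_pos.2 (hν_spec t ht).2.ne
    rw [abs_of_neg (hν_spec x hx).2, abs_of_neg (hν_spec y hy).2, neg_lt_neg_iff]
    exact hfmono (Ioo_subset_Ico_self (hν_spec x hx).1) (Ioo_subset_Ico_self (hν_spec y hy).1) hxy
  · calc |t - f t / f' t| / t ^ 2 = newtonGap f f' t / t ^ 2 / |f' t| := hratio ht
      _ ≤ f'' t / 2 / |f' t| := by
        refine div_le_div_of_nonneg_right ?_ (abs_nonneg _)
        rw [div_le_iff₀ (pow_pos ht.1 2)]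
        linarith [newtonGap_le hfd1 hfd2 hf0 hf''mono (hν_spec t ht).1]
      _ = f'' t / (2 * |f' t|) := div_div _ _ _

theorem newton_map_ratio_strict_mono (R : ℝ) (hR : 0 < R)
    (f f' f'' : ℝ → ℝ)
    (hfd1 : ∀ t ∈ Set.Ico (0 : ℝ) R, HasDerivWithinAt f (f' t) (Set.Ico (0 : ℝ) R) t)
    (hfd2 : ∀ t ∈ Set.Ico (0 : ℝ) R, HasDerivWithinAt f' (f'' t) (Set.Ico (0 : ℝ) R) t)
    (hfc : ContinuousOn f'' (Set.Ico (0 : ℝ) R))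
    (hf0 : f 0 = 0) (hf'0 : f' 0 = -1)
    (hfconv : ConvexOn ℝ (Set.Ico (0 : ℝ) R) f')
    (hfmono : StrictMonoOn f' (Set.Ico (0 : ℝ) R))
    (ν : ℝ) (hν : ν = sSup {u : ℝ | u ∈ Set.Ico (0 : ℝ) R ∧ f' u < 0})
    :
    StrictMonoOn (fun t : ℝ => |t - f t / f' t| / t ^ 2) (Set.Ioo 0 ν) ∧
      ∀ t ∈ Set.Ioo (0 : ℝ) ν, |t - f t / f' t| / t ^ 2 ≤ f'' t / (2 * |f' t|) :=
  newton_map_ratio_strict_mono_general R f f' f'' hfd1 hfd2 hf0 hfconv hfmono ν hν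
end

section
/- Let R > 0 and let f : [0, R) → ℝ be twice continuously differentiable with f(0) = 0, f'(0) = −1, and f' convex and strictly increasing. Set ν := sup{t ∈ [0, R) : f'(t) < 0}, n_f(t) := t − f(t)/f'(t) for t ∈ [0, ν), and ρ := sup{t ∈ (0, ν) : f(t)/(t f'(t)) − 1 < 1}. Then ρ > 0, and |n_f(t)| < t for all t ∈ (0, ρ). -/
/-! On `(0, ν)` we have `f' < 0`, and comparing `f'` on `[0, t]` with its value and its tangent
line at `t` gives `t f'(t) - t² f''(t) / 2 ≤ f(t) ≤ t f'(t)`. These two bounds make the derivative of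
`t ↦ f(t) / (t f'(t))` nonnegative, so this ratio is nondecreasing on `(0, ν)`; it tends to `1`
at `0⁺` because `f(t) / t → f'(0)`. Hence `ρ > 0`, and for `0 < t < ρ` the ratio lies in `[1, 2)`,
which is exactly `|n_f(t)| = t (f(t) / (t f'(t)) - 1) < t`. -/

open Filter Set Topology

theorem ConvexOn.add_mul_sub_le_of_hasDerivWithinAt {S : Set ℝ} {g : ℝ → ℝ} {g' x y : ℝ}
    (hg : ConvexOn ℝ S g) (hx : x ∈ S) (hy : y ∈ S) (hg' : HasDerivWithinAt g g' S x) :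
    g x + g' * (y - x) ≤ g y := by
  rcases lt_trichotomy x y with hxy | rfl | hyx
  · have := hg.le_slope_of_hasDerivWithinAt hx hy hxy hg'
    rw [slope_def_field, le_div_iff₀ (sub_pos.2 hxy)] at this
    linarith
  · simp
  · have := hg.slope_le_of_hasDerivWithinAt hy hx hyx hg'
    rw [slope_def_field, div_le_iff₀ (sub_pos.2 hyx)] at this
    linarith

theorem sub_le_sub_of_hasDerivWithinAt_le {F G F' G' : ℝ → ℝ} {a b : ℝ} (hab : a ≤ b)
    (hF : ∀ x ∈ Icc a b, HasDerivWithinAt F (F' x) (Icc a b) x)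
    (hG : ∀ x ∈ Icc a b, HasDerivWithinAt G (G' x) (Icc a b) x)
    (hle : ∀ x ∈ Ioo a b, G' x ≤ F' x) :
    G b - G a ≤ F b - F a := by
  have hmono : MonotoneOn (fun x ↦ F x - G x) (Icc a b) := by
    refine monotoneOn_of_hasDerivWithinAt_nonneg (convex_Icc a b)
      (fun x hx ↦ ((hF x hx).sub (hG x hx)).continuousWithinAt)
      (fun x hx ↦ ((hF x (interior_subset hx)).sub (hG x (interior_subset hx))).mono
        interior_subset) fun x hx ↦ ?_
    rw [interior_Icc] at hx
    exact sub_nonneg.2 (hle x hx)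
  have := hmono (left_mem_Icc.2 hab) (right_mem_Icc.2 hab) hab
  linarith

theorem MonotoneOn.mem_and_lt_of_lt_sSup {g : ℝ → ℝ} {a b c t : ℝ} (hg : MonotoneOn g (Ico a b))
    (hne : {u | u ∈ Ico a b ∧ g u < c}.Nonempty) (hat : a ≤ t)
    (ht : t < sSup {u | u ∈ Ico a b ∧ g u < c}) :
    t ∈ Ico a b ∧ g t < c := by
  obtain ⟨u, ⟨hu, hgu⟩, htu⟩ := exists_lt_of_lt_csSup hne ht
  have htI : t ∈ Ico a b := ⟨hat, htu.trans hu.2⟩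
  exact ⟨htI, (hg htI hu htu.le).trans_lt hgu⟩

theorem abs_sub_div_lt_self {t d y : ℝ} (ht : 0 < t) (hd : d < 0) (hy : y ≤ t * d)
    (h2 : y / (t * d) < 2) :
    |t - y / d| < t := by
  have htd : t * d < 0 := mul_neg_of_pos_of_neg ht hd
  rw [div_lt_iff_of_neg htd] at h2
  have heq : t - y / d = (t * d - y) / d := by rw [sub_div, mul_div_cancel_right₀ _ hd.ne]
  rw [heq, abs_lt, lt_div_iff_of_neg hd, div_lt_iff_of_neg hd]
  constructor <;> nlinarith

section NewtonRatio

variable {s : Set ℝ} {f f' f'' : ℝ → ℝ} {t : ℝ}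

theorem le_mul_deriv_of_monotoneOn (ht : 0 ≤ t) (hs : Icc 0 t ⊆ s)
    (hf : ∀ x ∈ s, HasDerivWithinAt f (f' x) s x) (hmono : MonotoneOn f' s) (hf0 : f 0 = 0) :
    f t ≤ t * f' t := by
  have := sub_le_sub_of_hasDerivWithinAt_le ht (F := fun x ↦ f' t * x) (F' := fun _ ↦ f' t)
    (fun x _ ↦ ((hasDerivAt_id x).const_mul (f' t)).hasDerivWithinAt.congr_deriv (mul_one _))
    (fun x hx ↦ (hf x (hs hx)).mono hs)
    (fun x hx ↦ hmono (hs ⟨hx.1.le, hx.2.le⟩) (hs (right_mem_Icc.2 ht)) hx.2.le)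
  simp only [hf0] at this
  linarith

theorem mul_deriv_sub_le_of_convexOn (ht : 0 ≤ t) (hs : Icc 0 t ⊆ s)
    (hf : ∀ x ∈ s, HasDerivWithinAt f (f' x) s x) (hf' : HasDerivWithinAt f' (f'' t) s t)
    (hconv : ConvexOn ℝ s f') (hf0 : f 0 = 0) :
    t * f' t - f t ≤ t ^ 2 * f'' t / 2 := by
  have hG : ∀ x, HasDerivAt (fun x ↦ f' t * x + f'' t * (x ^ 2 / 2 - t * x))
      (f' t + f'' t * (x - t)) x := fun x ↦ by
    refine (((hasDerivAt_id x).const_mul (f' t)).add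
      ((((hasDerivAt_pow 2 x).div_const 2).sub ((hasDerivAt_id x).const_mul t)).const_mul
        (f'' t))).congr_deriv ?_
    ring
  have := sub_le_sub_of_hasDerivWithinAt_le ht (fun x hx ↦ (hf x (hs hx)).mono hs)
    (fun x _ ↦ (hG x).hasDerivWithinAt)
    (fun x hx ↦ hconv.add_mul_sub_le_of_hasDerivWithinAt (hs (right_mem_Icc.2 ht))
      (hs ⟨hx.1.le, hx.2.le⟩) hf')
  simp only [hf0] at this
  nlinarith

theorem tendsto_div_mul_deriv_nhdsGT_zero (hs : s ∈ 𝓝[>] (0 : ℝ)) (hf0 : f 0 = 0)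
    (hf : HasDerivWithinAt f (f' 0) s 0) (hf' : ContinuousWithinAt f' s 0) (hne : f' 0 ≠ 0) :
    Tendsto (fun t ↦ f t / (t * f' t)) (𝓝[>] 0) (𝓝 1) := by
  have hslope : Tendsto (fun t ↦ f t / t) (𝓝[>] 0) (𝓝 (f' 0)) := by
    have hslope_eq : slope f 0 = fun t ↦ f t / t := by
      ext t
      simp [slope_def_field, hf0]
    rw [← hslope_eq]
    exact (hasDerivWithinAt_iff_tendsto_slope' self_notMem_Ioi).1 (hf.mono_of_mem_nhdsWithin hs)
  have hcont : Tendsto f' (𝓝[>] 0) (𝓝 (f' 0)) :=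
    (hf'.tendsto).mono_left (nhdsWithin_le_of_mem hs)
  rw [← div_self hne]
  exact (hslope.div hcont hne).congr fun t ↦ div_div _ _ _

theorem monotoneOn_div_mul_deriv {a : ℝ} (h0 : 0 ∈ s) (hsub : Ioo 0 a ⊆ s)
    (hf : ∀ x ∈ s, HasDerivWithinAt f (f' x) s x) (hf' : ∀ x ∈ s, HasDerivWithinAt f' (f'' x) s x)
    (hconv : ConvexOn ℝ s f') (hmono : MonotoneOn f' s) (hf0 : f 0 = 0)
    (hneg : ∀ x ∈ Ioo 0 a, f' x < 0) :
    MonotoneOn (fun x ↦ f x / (x * f' x)) (Ioo 0 a) := by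
  have key : ∀ x ∈ Ioo 0 a, ∃ d, HasDerivAt (fun x ↦ f x / (x * f' x)) d x ∧ 0 ≤ d := by
    intro x hx
    have hxs := hsub hx
    have hnhds : s ∈ 𝓝 x := mem_of_superset (Ioo_mem_nhds hx.1 hx.2) hsub
    have hIcc : Icc 0 x ⊆ s := hconv.1.ordConnected.out h0 hxs
    have hneg := hneg x hx
    refine ⟨_, ((hf x hxs).hasDerivAt hnhds).div
      ((hasDerivAt_id x).mul ((hf' x hxs).hasDerivAt hnhds)) (mul_neg_of_pos_of_neg hx.1 hneg).ne,
      div_nonneg ?_ (sq_nonneg _)⟩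
    have hup := le_mul_deriv_of_monotoneOn hx.1.le hIcc hf hmono hf0
    have hlow := mul_deriv_sub_le_of_convexOn hx.1.le hIcc hf (hf' x hxs) hconv hf0
    have hf'' : 0 ≤ x * f'' x := by
      have := hconv.add_mul_sub_le_of_hasDerivWithinAt hxs h0 (hf' x hxs)
      have := hmono h0 hxs hx.1.le
      linarith
    dsimp only [id]
    nlinarith [mul_nonneg_of_nonpos_of_nonpos
        (by linarith : x * f' x - f x - x ^ 2 * f'' x / 2 ≤ 0) hneg.le,
      mul_nonneg (sub_nonneg.2 hup) hf'', mul_nonneg hf'' (mul_nonneg hx.1.le (neg_nonneg.2 hneg.le))]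
  choose d hd hd0 using key
  refine monotoneOn_of_deriv_nonneg (convex_Ioo 0 a)
    (fun x hx ↦ (hd x hx).continuousAt.continuousWithinAt)
    (fun x hx ↦ (hd x (interior_subset hx)).differentiableAt.differentiableWithinAt) fun x hx ↦ ?_
  rw [interior_Ioo] at hx
  rw [(hd x hx).deriv]
  exact hd0 x hx

end NewtonRatio

theorem rho_pos_and_newton_map_contraction_general (R : ℝ) (hR : 0 < R)
    (f f' f'' : ℝ → ℝ)
    (hfd1 : ∀ t ∈ Set.Ico (0 : ℝ) R, HasDerivWithinAt f (f' t) (Set.Ico (0 : ℝ) R) t)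
    (hfd2 : ∀ t ∈ Set.Ico (0 : ℝ) R, HasDerivWithinAt f' (f'' t) (Set.Ico (0 : ℝ) R) t)
    (hf0 : f 0 = 0) (hf'0 : f' 0 = -1)
    (hfconv : ConvexOn ℝ (Set.Ico (0 : ℝ) R) f')
    (hfmono : StrictMonoOn f' (Set.Ico (0 : ℝ) R))
    (ν : ℝ) (hν : ν = sSup {u : ℝ | u ∈ Set.Ico (0 : ℝ) R ∧ f' u < 0})
    (ρ : ℝ) (hρ : ρ = sSup {u : ℝ | u ∈ Set.Ioo (0 : ℝ) ν ∧ f u / (u * f' u) - 1 < 1})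
    :
    0 < ρ ∧ ∀ t ∈ Set.Ioo (0 : ℝ) ρ, |t - f t / f' t| < t := by
  set S := {u : ℝ | u ∈ Set.Ico (0 : ℝ) R ∧ f' u < 0}
  set T := {u : ℝ | u ∈ Set.Ioo (0 : ℝ) ν ∧ f u / (u * f' u) - 1 < 1}
  have h0R : (0 : ℝ) ∈ Ico 0 R := ⟨le_rfl, hR⟩
  have hbelow : ∀ t ∈ Ico 0 ν, t ∈ Ico 0 R ∧ f' t < 0 := fun t ht ↦
    hfmono.monotoneOn.mem_and_lt_of_lt_sSup ⟨0, h0R, by rw [hf'0]; norm_num⟩ ht.1 (hν ▸ ht.2)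
  have hratio := monotoneOn_div_mul_deriv h0R (fun x hx ↦ (hbelow x ⟨hx.1.le, hx.2⟩).1) hfd1 hfd2
    hfconv hfmono.monotoneOn hf0 fun x hx ↦ (hbelow x ⟨hx.1.le, hx.2⟩).2
  have hnear : ∀ᶠ t in 𝓝[>] 0, t ∈ S ∧ f t / (t * f' t) < 2 := by
    have hcont := (hfd2 0 h0R).continuousWithinAt.tendsto.mono_left
      (nhdsWithin_le_of_mem (Ico_mem_nhdsGT hR))
    have hlim := tendsto_div_mul_deriv_nhdsGT_zero (Ico_mem_nhdsGT hR) hf0 (hfd1 0 h0R)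
      (hfd2 0 h0R).continuousWithinAt (by rw [hf'0]; norm_num)
    filter_upwards [Ico_mem_nhdsGT hR,
      hcont.eventually (eventually_lt_nhds (show f' 0 < 0 by rw [hf'0]; norm_num)),
      hlim.eventually (eventually_lt_nhds one_lt_two)] with t htR htneg ht2
    exact ⟨⟨htR, htneg⟩, ht2⟩
  obtain ⟨t₀, ⟨ht₀S, -⟩, ht₀ : 0 < t₀⟩ := (hnear.and self_mem_nhdsWithin).exists
  have hν0 : 0 < ν := ht₀.trans_le (hν ▸ le_csSup ⟨R, fun u hu ↦ hu.1.2.le⟩ ht₀S)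
  obtain ⟨u₀, ⟨-, hu₀2⟩, hu₀⟩ := (hnear.and (Ioo_mem_nhdsGT hν0)).exists
  have hT : u₀ ∈ T := ⟨hu₀, by linarith⟩
  have hρ0 : 0 < ρ := hρ ▸ hu₀.1.trans_le (le_csSup ⟨ν, fun u hu ↦ hu.1.2.le⟩ hT)
  refine ⟨hρ0, fun t ht ↦ ?_⟩
  obtain ⟨u, ⟨huν, hu2⟩, htu⟩ := exists_lt_of_lt_csSup ⟨_, hT⟩ (hρ ▸ ht.2)
  obtain ⟨htR, htneg⟩ := hbelow t ⟨ht.1.le, htu.trans huν.2⟩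
  exact abs_sub_div_lt_self ht.1 htneg
    (le_mul_deriv_of_monotoneOn ht.1.le (Icc_subset_Ico_right htR.2) hfd1 hfmono.monotoneOn hf0)
    (by linarith [hratio ⟨ht.1, htu.trans huν.2⟩ huν htu.le])

theorem rho_pos_and_newton_map_contraction (R : ℝ) (hR : 0 < R)
    (f f' f'' : ℝ → ℝ)
    (hfd1 : ∀ t ∈ Set.Ico (0 : ℝ) R, HasDerivWithinAt f (f' t) (Set.Ico (0 : ℝ) R) t)
    (hfd2 : ∀ t ∈ Set.Ico (0 : ℝ) R, HasDerivWithinAt f' (f'' t) (Set.Ico (0 : ℝ) R) t)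
    (hfc : ContinuousOn f'' (Set.Ico (0 : ℝ) R))
    (hf0 : f 0 = 0) (hf'0 : f' 0 = -1)
    (hfconv : ConvexOn ℝ (Set.Ico (0 : ℝ) R) f')
    (hfmono : StrictMonoOn f' (Set.Ico (0 : ℝ) R))
    (ν : ℝ) (hν : ν = sSup {u : ℝ | u ∈ Set.Ico (0 : ℝ) R ∧ f' u < 0})
    (ρ : ℝ) (hρ : ρ = sSup {u : ℝ | u ∈ Set.Ioo (0 : ℝ) ν ∧ f u / (u * f' u) - 1 < 1})
    :
    0 < ρ ∧ ∀ t ∈ Set.Ioo (0 : ℝ) ρ, |t - f t / f' t| < t :=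
  rho_pos_and_newton_map_contraction_general R hR f f' f'' hfd1 hfd2 hf0 hf'0 hfconv hfmono ν hν ρ
    hρ
end

section
/- Let R > 0 and let f : [0, R) → ℝ be twice continuously differentiable with f(0) = 0, f'(0) = −1, and f' convex and strictly increasing. Set ν := sup{t ∈ [0, R) : f'(t) < 0}, n_f(t) := t − f(t)/f'(t) for t ∈ [0, ν), and ρ := sup{t ∈ (0, ν) : f(t)/(t f'(t)) − 1 < 1}. Fix t₀ ∈ (0, ρ) and define t_{k+1} := |n_f(t_k)| for k = 0, 1, …. Then the sequence {t_k} is well defined, strictly decreasing, contained in (0, ρ), and converges to 0; moreover the sequence {t_{k+1}/t_k²} is strictly decreasing and t_{k+1}/t_k² ≤ f''(t₀)/(2|f'(t₀)|) for all k. -/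
/-!
Write `J(t) = t f'(t) - f(t)`. Since `J' = t f''` and `f''` is monotone, `0 < J(t) ≤ t² f''(t) / 2`,
and this Taylor bound is exactly what makes `J(t) / t²` monotone. Where `f' < 0`, the Newton step
is `|n_f(t)| = t² q(t)` with `q(t) = J(t) / (t² |f'(t)|)` positive and strictly increasing, and
`f(t) / (t f'(t)) - 1 = t q(t)`; so `t q(t) < 1` on `(0, ρ)`. Hence `t_{k+1} = t_k · t_k q(t_k)`
contracts at least geometrically with ratio `t₀ q(t₀) < 1`, and `t_{k+1} / t_k² = q(t_k)` decreases
along the decreasing sequence and is bounded by `q(t₀) ≤ f''(t₀) / (2 |f'(t₀)|)`.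
-/

open Filter Set Topology

lemma ConvexOn.monotoneOn_of_hasDerivWithinAt {s : Set ℝ} {g g' : ℝ → ℝ}
    (hconv : ConvexOn ℝ s g) (hd : ∀ t ∈ s, HasDerivWithinAt g (g' t) s t) :
    MonotoneOn g' s := by
  intro u hu v hv huv
  rcases huv.eq_or_lt with rfl | h
  · exact le_rfl
  · exact (hconv.le_slope_of_hasDerivWithinAt hu hv h (hd u hu)).trans
      (hconv.slope_le_of_hasDerivWithinAt hu hv h (hd v hv))

lemma mem_and_lt_of_lt_sSup {D : Set ℝ} {g : ℝ → ℝ} {c t : ℝ} (hg : MonotoneOn g D)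
    (hD : ∀ w ∈ D, t < w → t ∈ D) (ht₀ : 0 ≤ t) (ht : t < sSup {u | u ∈ D ∧ g u < c}) :
    t ∈ D ∧ g t < c := by
  -- the junk value `sSup ∅ = 0` rules out an empty sublevel set
  have hne : {u | u ∈ D ∧ g u < c}.Nonempty := by
    by_contra h
    rw [not_nonempty_iff_eq_empty.mp h, Real.sSup_empty] at ht
    linarith
  obtain ⟨w, ⟨hwD, hw⟩, htw⟩ := exists_lt_of_lt_csSup hne ht
  have htD := hD w hwD htw
  exact ⟨htD, (hg htD hwD htw.le).trans_lt hw⟩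

section Majorant

variable {R : ℝ} {f f' f'' : ℝ → ℝ}

lemma HasDerivWithinAt.mul_deriv_sub {s : Set ℝ} {t : ℝ}
    (h₁ : HasDerivWithinAt f (f' t) s t) (h₂ : HasDerivWithinAt f' (f'' t) s t) :
    HasDerivWithinAt (fun t => t * f' t - f t) (t * f'' t) s t :=
  (((hasDerivWithinAt_id t s).fun_mul h₂).fun_sub h₁).congr_deriv (by simp)

lemma mul_deriv_sub_pos (hfd1 : ∀ t ∈ Ico 0 R, HasDerivWithinAt f (f' t) (Ico 0 R) t)
    (hf0 : f 0 = 0) (hfmono : StrictMonoOn f' (Ico 0 R)) {t : ℝ} (ht : t ∈ Ioo 0 R) :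
    0 < t * f' t - f t := by
  obtain ⟨c, hc, hslope⟩ := exists_hasDerivAt_eq_slope f f' ht.1
    (fun u hu => (hfd1 u ⟨hu.1, hu.2.trans_lt ht.2⟩).continuousWithinAt.mono
      (Icc_subset_Ico_right ht.2))
    (fun u hu => (hfd1 u ⟨hu.1.le, hu.2.trans ht.2⟩).hasDerivAt
      (Ico_mem_nhds hu.1 (hu.2.trans ht.2)))
  have hfc : f' c < f' t := hfmono ⟨hc.1.le, hc.2.trans ht.2⟩ ⟨ht.1.le, ht.2⟩ hc.2
  rw [hf0, sub_zero, sub_zero, eq_div_iff ht.1.ne'] at hslope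
  nlinarith [ht.1]

lemma mul_deriv_sub_le (hfd1 : ∀ t ∈ Ico 0 R, HasDerivWithinAt f (f' t) (Ico 0 R) t)
    (hfd2 : ∀ t ∈ Ico 0 R, HasDerivWithinAt f' (f'' t) (Ico 0 R) t)
    (hf0 : f 0 = 0) (hf'' : MonotoneOn f'' (Ico 0 R)) {t : ℝ} (ht : t ∈ Ioo 0 R) :
    t * f' t - f t ≤ t ^ 2 * f'' t / 2 := by
  have hsub : Icc 0 t ⊆ Ico 0 R := Icc_subset_Ico_right ht.2
  have hJ : ∀ s ∈ Icc 0 t, HasDerivWithinAt (fun s => s * f' s - f s) (s * f'' s) (Ico 0 R) s :=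
    fun s hs => (hfd1 s (hsub hs)).mul_deriv_sub (hfd2 s (hsub hs))
  -- `s ↦ s² f''(t) / 2 - J(s)` vanishes at `0` and has derivative `s (f''(t) - f''(s)) ≥ 0`
  have hmono : MonotoneOn (fun s => s ^ 2 * f'' t / 2 - (s * f' s - f s)) (Icc 0 t) := by
    apply monotoneOn_of_hasDerivWithinAt_nonneg (f' := fun s => s * f'' t - s * f'' s)
      (convex_Icc 0 t)
    · exact fun s hs => ((hasDerivAt_id s).pow 2 |>.mul_const _ |>.div_const 2
        |>.continuousAt.continuousWithinAt).sub ((hJ s hs).continuousWithinAt.mono hsub)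
    · intro s hs
      rw [interior_Icc] at hs ⊢
      have hJs := ((hJ s (Ioo_subset_Icc_self hs)).hasDerivAt
        (Ico_mem_nhds hs.1 (hs.2.trans ht.2))).hasDerivWithinAt (s := Ioo 0 t)
      exact ((((hasDerivWithinAt_id s _).fun_pow 2).mul_const (f'' t)).div_const 2
        |>.fun_sub hJs).congr_deriv (by simp; ring)
    · intro s hs
      rw [interior_Icc] at hs
      have := hf'' (hsub (Ioo_subset_Icc_self hs)) ⟨ht.1.le, ht.2⟩ hs.2.le
      nlinarith [hs.1]
  have := hmono ⟨le_rfl, ht.1.le⟩ ⟨ht.1.le, le_rfl⟩ ht.1.le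
  simp only [hf0] at this
  linarith

lemma monotoneOn_mul_deriv_sub_div_sq
    (hfd1 : ∀ t ∈ Ico 0 R, HasDerivWithinAt f (f' t) (Ico 0 R) t)
    (hfd2 : ∀ t ∈ Ico 0 R, HasDerivWithinAt f' (f'' t) (Ico 0 R) t)
    (hf0 : f 0 = 0) (hf'' : MonotoneOn f'' (Ico 0 R)) :
    MonotoneOn (fun t => (t * f' t - f t) / t ^ 2) (Ioo 0 R) := by
  have hderiv : ∀ t ∈ Ioo 0 R, HasDerivAt (fun t => (t * f' t - f t) / t ^ 2)
      ((t * f'' t * t ^ 2 - (t * f' t - f t) * (2 * t)) / (t ^ 2) ^ 2) t := fun t ht => by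
    have hJ := ((hfd1 t (Ioo_subset_Ico_self ht)).mul_deriv_sub
      (hfd2 t (Ioo_subset_Ico_self ht))).hasDerivAt (Ico_mem_nhds ht.1 ht.2)
    exact (hJ.fun_div (hasDerivAt_pow 2 t) (pow_ne_zero 2 ht.1.ne')).congr_deriv (by simp)
  apply monotoneOn_of_hasDerivWithinAt_nonneg (convex_Ioo 0 R)
    (fun t ht => (hderiv t ht).continuousAt.continuousWithinAt)
  · rw [interior_Ioo]
    exact fun t ht => (hderiv t ht).hasDerivWithinAt
  · rw [interior_Ioo]
    intro t ht
    have := mul_deriv_sub_le hfd1 hfd2 hf0 hf'' ht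
    apply div_nonneg _ (by positivity)
    nlinarith [ht.1]

/-- `quadRatio f f' t = |n_f(t)| / t²` whenever `0 < t` and `f' t < 0` (see `abs_newton_eq`). -/
noncomputable def quadRatio (f f' : ℝ → ℝ) (t : ℝ) : ℝ :=
  (t * f' t - f t) / t ^ 2 / -f' t

lemma abs_newton_eq {t : ℝ} (ht : 0 < t) (hf't : f' t < 0) (hJ : 0 < t * f' t - f t) :
    |t - f t / f' t| = t ^ 2 * quadRatio f f' t := by
  have h : t - f t / f' t = -(t ^ 2 * quadRatio f f' t) := by
    unfold quadRatio
    field_simp [hf't.ne]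
  rw [h, abs_neg, abs_of_pos]
  unfold quadRatio
  have : 0 < -f' t := neg_pos.mpr hf't
  positivity

lemma div_mul_deriv_sub_one_eq {t : ℝ} (ht : 0 < t) (hf't : f' t < 0) :
    f t / (t * f' t) - 1 = t * quadRatio f f' t := by
  unfold quadRatio
  field_simp [hf't.ne]
  ring

lemma quadRatio_pos (hfd1 : ∀ t ∈ Ico 0 R, HasDerivWithinAt f (f' t) (Ico 0 R) t)
    (hf0 : f 0 = 0) (hfmono : StrictMonoOn f' (Ico 0 R)) {t : ℝ} (ht : t ∈ Ioo 0 R)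
    (hf't : f' t < 0) : 0 < quadRatio f f' t :=
  div_pos (div_pos (mul_deriv_sub_pos hfd1 hf0 hfmono ht) (pow_pos ht.1 2)) (neg_pos.mpr hf't)

lemma quadRatio_le (hfd1 : ∀ t ∈ Ico 0 R, HasDerivWithinAt f (f' t) (Ico 0 R) t)
    (hfd2 : ∀ t ∈ Ico 0 R, HasDerivWithinAt f' (f'' t) (Ico 0 R) t)
    (hf0 : f 0 = 0) (hf'' : MonotoneOn f'' (Ico 0 R)) {t : ℝ} (ht : t ∈ Ioo 0 R)
    (hf't : f' t < 0) : quadRatio f f' t ≤ f'' t / (2 * |f' t|) := by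
  have hJ : (t * f' t - f t) / t ^ 2 ≤ f'' t / 2 := by
    rw [div_le_iff₀ (pow_pos ht.1 2)]
    linarith [mul_deriv_sub_le hfd1 hfd2 hf0 hf'' ht]
  rw [abs_of_neg hf't, ← div_div]
  exact div_le_div_of_nonneg_right hJ (neg_nonneg.mpr hf't.le)

lemma quadRatio_strictMonoOn (hfd1 : ∀ t ∈ Ico 0 R, HasDerivWithinAt f (f' t) (Ico 0 R) t)
    (hfd2 : ∀ t ∈ Ico 0 R, HasDerivWithinAt f' (f'' t) (Ico 0 R) t)
    (hf0 : f 0 = 0) (hf'' : MonotoneOn f'' (Ico 0 R)) (hfmono : StrictMonoOn f' (Ico 0 R)) :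
    StrictMonoOn (quadRatio f f') {t | t ∈ Ioo 0 R ∧ f' t < 0} := by
  intro u ⟨hu, hf'u⟩ v ⟨hv, hf'v⟩ huv
  have hJ := monotoneOn_mul_deriv_sub_div_sq hfd1 hfd2 hf0 hf'' hu hv huv.le
  have hJv : 0 < (v * f' v - f v) / v ^ 2 :=
    div_pos (mul_deriv_sub_pos hfd1 hf0 hfmono hv) (pow_pos hv.1 2)
  have hf' : f' u < f' v :=
    hfmono (Ioo_subset_Ico_self hu) (Ioo_subset_Ico_self hv) huv
  calc quadRatio f f' u ≤ (v * f' v - f v) / v ^ 2 / -f' u :=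
        div_le_div_of_nonneg_right hJ (neg_nonneg.mpr hf'u.le)
    _ < quadRatio f f' v := div_lt_div_of_pos_left hJv (neg_pos.mpr hf'v) (neg_lt_neg hf')

lemma strictMonoOn_mul_quadRatio (hfd1 : ∀ t ∈ Ico 0 R, HasDerivWithinAt f (f' t) (Ico 0 R) t)
    (hfd2 : ∀ t ∈ Ico 0 R, HasDerivWithinAt f' (f'' t) (Ico 0 R) t)
    (hf0 : f 0 = 0) (hf'' : MonotoneOn f'' (Ico 0 R)) (hfmono : StrictMonoOn f' (Ico 0 R)) :
    StrictMonoOn (fun t => t * quadRatio f f' t) {t | t ∈ Ioo 0 R ∧ f' t < 0} :=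
  fun _ hu _ hv huv =>
    mul_lt_mul'' huv (quadRatio_strictMonoOn hfd1 hfd2 hf0 hf'' hfmono hu hv huv) hu.1.1.le
      (quadRatio_pos hfd1 hf0 hfmono hu.1 hu.2).le

lemma mem_Ioo_and_deriv_neg_of_lt_sSup (hfmono : MonotoneOn f' (Ico 0 R)) {u : ℝ}
    (hu : u ∈ Ioo 0 (sSup {x | x ∈ Ico 0 R ∧ f' x < 0})) : u ∈ Ioo 0 R ∧ f' u < 0 := by
  obtain ⟨⟨-, huR⟩, hf'u⟩ := mem_and_lt_of_lt_sSup hfmono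
    (fun w hw huw => ⟨hu.1.le, huw.trans hw.2⟩) hu.1.le hu.2
  exact ⟨⟨hu.1, huR⟩, hf'u⟩

lemma mul_quadRatio_lt_one_of_lt_sSup
    (hfd1 : ∀ t ∈ Ico 0 R, HasDerivWithinAt f (f' t) (Ico 0 R) t)
    (hfd2 : ∀ t ∈ Ico 0 R, HasDerivWithinAt f' (f'' t) (Ico 0 R) t)
    (hf0 : f 0 = 0) (hf'' : MonotoneOn f'' (Ico 0 R)) (hfmono : StrictMonoOn f' (Ico 0 R))
    {ν u : ℝ} (hν : ∀ x ∈ Ioo 0 ν, x ∈ Ioo 0 R ∧ f' x < 0)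
    (hu : u ∈ Ioo 0 (sSup {x | x ∈ Ioo 0 ν ∧ f x / (x * f' x) - 1 < 1})) :
    (u ∈ Ioo 0 R ∧ f' u < 0) ∧ u * quadRatio f f' u < 1 := by
  have hnewton (x : ℝ) (hx : x ∈ Ioo 0 ν) : f x / (x * f' x) - 1 = x * quadRatio f f' x :=
    div_mul_deriv_sub_one_eq hx.1 (hν x hx).2
  have hg := ((strictMonoOn_mul_quadRatio hfd1 hfd2 hf0 hf'' hfmono).monotoneOn.mono
    hν).congr fun x hx => (hnewton x hx).symm
  obtain ⟨huν, hu1⟩ := mem_and_lt_of_lt_sSup hg (fun w hw huw => ⟨hu.1, huw.trans hw.2⟩)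
    hu.1.le hu.2
  exact ⟨hν u huν, hnewton u huν ▸ hu1⟩

end Majorant

section QuadraticIteration

variable {a : ℝ} {q : ℝ → ℝ} {t : ℕ → ℝ}

lemma succ_mem_Ioo_of_eq_sq_mul (hq : ∀ x ∈ Ioo 0 a, 0 < q x ∧ x * q x < 1) {k : ℕ}
    (hk : t k ∈ Ioo 0 a) (hstep : t (k + 1) = t k ^ 2 * q (t k)) :
    t (k + 1) ∈ Ioo 0 (t k) := by
  obtain ⟨hpos, hlt⟩ := hq _ hk
  rw [hstep, sq, mul_assoc]
  exact ⟨mul_pos hk.1 (mul_pos hk.1 hpos), mul_lt_of_lt_one_right hk.1 hlt⟩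

lemma mem_Ioo_of_eq_sq_mul (hq : ∀ x ∈ Ioo 0 a, 0 < q x ∧ x * q x < 1) (h0 : t 0 ∈ Ioo 0 a)
    (hstep : ∀ k, t k ∈ Ioo 0 a → t (k + 1) = t k ^ 2 * q (t k)) (k : ℕ) : t k ∈ Ioo 0 a := by
  induction k with
  | zero => exact h0
  | succ k ih =>
    have h := succ_mem_Ioo_of_eq_sq_mul hq ih (hstep k ih)
    exact ⟨h.1, h.2.trans ih.2⟩

lemma strictAnti_of_eq_sq_mul (hq : ∀ x ∈ Ioo 0 a, 0 < q x ∧ x * q x < 1) (h0 : t 0 ∈ Ioo 0 a)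
    (hstep : ∀ k, t k ∈ Ioo 0 a → t (k + 1) = t k ^ 2 * q (t k)) : StrictAnti t :=
  strictAnti_nat_of_succ_lt fun k =>
    have hk := mem_Ioo_of_eq_sq_mul hq h0 hstep k
    (succ_mem_Ioo_of_eq_sq_mul hq hk (hstep k hk)).2

lemma div_sq_eq_of_eq_sq_mul (hq : ∀ x ∈ Ioo 0 a, 0 < q x ∧ x * q x < 1) (h0 : t 0 ∈ Ioo 0 a)
    (hstep : ∀ k, t k ∈ Ioo 0 a → t (k + 1) = t k ^ 2 * q (t k)) (k : ℕ) :
    t (k + 1) / t k ^ 2 = q (t k) := by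
  have hk := mem_Ioo_of_eq_sq_mul hq h0 hstep k
  rw [hstep k hk, mul_div_cancel_left₀ _ (pow_ne_zero 2 hk.1.ne')]

lemma tendsto_zero_of_eq_sq_mul (hq : ∀ x ∈ Ioo 0 a, 0 < q x ∧ x * q x < 1)
    (hmono : MonotoneOn q (Ioo 0 a)) (h0 : t 0 ∈ Ioo 0 a)
    (hstep : ∀ k, t k ∈ Ioo 0 a → t (k + 1) = t k ^ 2 * q (t k)) :
    Tendsto t atTop (𝓝 0) := by
  have hmem := mem_Ioo_of_eq_sq_mul hq h0 hstep
  have hanti := (strictAnti_of_eq_sq_mul hq h0 hstep).antitone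
  obtain ⟨hq0, hr⟩ := hq _ h0
  have hbound : ∀ k, t k ≤ t 0 * (t 0 * q (t 0)) ^ k := by
    intro k
    induction k with
    | zero => simp
    | succ k ih =>
      have hqk : q (t k) ≤ q (t 0) := hmono (hmem k) h0 (hanti k.zero_le)
      calc t (k + 1) = t k * (t k * q (t k)) := by rw [hstep k (hmem k)]; ring
        _ ≤ t k * (t 0 * q (t 0)) := mul_le_mul_of_nonneg_left
            (mul_le_mul (hanti k.zero_le) hqk (hq _ (hmem k)).1.le h0.1.le) (hmem k).1.le
        _ ≤ t 0 * (t 0 * q (t 0)) ^ k * (t 0 * q (t 0)) :=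
            mul_le_mul_of_nonneg_right ih (mul_pos h0.1 hq0).le
        _ = t 0 * (t 0 * q (t 0)) ^ (k + 1) := by ring
  refine squeeze_zero (fun k => (hmem k).1.le) hbound ?_
  simpa using (tendsto_pow_atTop_nhds_zero_of_lt_one (mul_pos h0.1 hq0).le hr).const_mul (t 0)

end QuadraticIteration

theorem majorant_sequence_convergence_general (R : ℝ)
    (f f' f'' : ℝ → ℝ)
    (hfd1 : ∀ t ∈ Set.Ico (0 : ℝ) R, HasDerivWithinAt f (f' t) (Set.Ico (0 : ℝ) R) t)
    (hfd2 : ∀ t ∈ Set.Ico (0 : ℝ) R, HasDerivWithinAt f' (f'' t) (Set.Ico (0 : ℝ) R) t)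
    (hf0 : f 0 = 0)
    (hfconv : ConvexOn ℝ (Set.Ico (0 : ℝ) R) f')
    (hfmono : StrictMonoOn f' (Set.Ico (0 : ℝ) R))
    (ν : ℝ) (hν : ν = sSup {u : ℝ | u ∈ Set.Ico (0 : ℝ) R ∧ f' u < 0})
    (ρ : ℝ) (hρ : ρ = sSup {u : ℝ | u ∈ Set.Ioo (0 : ℝ) ν ∧ f u / (u * f' u) - 1 < 1})
    (tseq : ℕ → ℝ) (ht0 : tseq 0 ∈ Set.Ioo (0 : ℝ) ρ)
    (htk : ∀ k : ℕ, tseq (k + 1) = |tseq k - f (tseq k) / f' (tseq k)|) :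
    StrictAnti tseq ∧ (∀ k : ℕ, tseq k ∈ Set.Ioo (0 : ℝ) ρ) ∧
      Filter.Tendsto tseq Filter.atTop (nhds 0) ∧
      StrictAnti (fun k : ℕ => tseq (k + 1) / tseq k ^ 2) ∧
      ∀ k : ℕ, tseq (k + 1) / tseq k ^ 2 ≤ f'' (tseq 0) / (2 * |f' (tseq 0)|) := by
  have hf'' := hfconv.monotoneOn_of_hasDerivWithinAt hfd2
  have hρ_mem (x : ℝ) (hx : x ∈ Ioo 0 ρ) :
      (x ∈ Ioo 0 R ∧ f' x < 0) ∧ x * quadRatio f f' x < 1 :=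
    mul_quadRatio_lt_one_of_lt_sSup hfd1 hfd2 hf0 hf'' hfmono
      (fun u hu => mem_Ioo_and_deriv_neg_of_lt_sSup hfmono.monotoneOn ⟨hu.1, hu.2.trans_eq hν⟩)
      ⟨hx.1, hx.2.trans_eq hρ⟩
  have hq (x : ℝ) (hx : x ∈ Ioo 0 ρ) : 0 < quadRatio f f' x ∧ x * quadRatio f f' x < 1 :=
    ⟨quadRatio_pos hfd1 hf0 hfmono (hρ_mem x hx).1.1 (hρ_mem x hx).1.2, (hρ_mem x hx).2⟩
  have hqmono := (quadRatio_strictMonoOn hfd1 hfd2 hf0 hf'' hfmono).mono fun x hx => (hρ_mem x hx).1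
  have hstep (k : ℕ) (hk : tseq k ∈ Ioo 0 ρ) :
      tseq (k + 1) = tseq k ^ 2 * quadRatio f f' (tseq k) :=
    (htk k).trans <| abs_newton_eq hk.1 (hρ_mem _ hk).1.2
      (mul_deriv_sub_pos hfd1 hf0 hfmono (hρ_mem _ hk).1.1)
  have hmem := mem_Ioo_of_eq_sq_mul hq ht0 hstep
  have hanti := strictAnti_of_eq_sq_mul hq ht0 hstep
  have hratio := div_sq_eq_of_eq_sq_mul hq ht0 hstep
  refine ⟨hanti, hmem, tendsto_zero_of_eq_sq_mul hq hqmono.monotoneOn ht0 hstep,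
    fun m n hmn => ?_, fun k => ?_⟩
  · simp only [hratio]
    exact hqmono (hmem n) (hmem m) (hanti hmn)
  · rw [hratio]
    exact (hqmono.monotoneOn (hmem k) ht0 (hanti.antitone k.zero_le)).trans
      (quadRatio_le hfd1 hfd2 hf0 hf'' (hρ_mem _ ht0).1.1 (hρ_mem _ ht0).1.2)

theorem majorant_sequence_convergence (R : ℝ) (hR : 0 < R)
    (f f' f'' : ℝ → ℝ)
    (hfd1 : ∀ t ∈ Set.Ico (0 : ℝ) R, HasDerivWithinAt f (f' t) (Set.Ico (0 : ℝ) R) t)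
    (hfd2 : ∀ t ∈ Set.Ico (0 : ℝ) R, HasDerivWithinAt f' (f'' t) (Set.Ico (0 : ℝ) R) t)
    (hfc : ContinuousOn f'' (Set.Ico (0 : ℝ) R))
    (hf0 : f 0 = 0) (hf'0 : f' 0 = -1)
    (hfconv : ConvexOn ℝ (Set.Ico (0 : ℝ) R) f')
    (hfmono : StrictMonoOn f' (Set.Ico (0 : ℝ) R))
    (ν : ℝ) (hν : ν = sSup {u : ℝ | u ∈ Set.Ico (0 : ℝ) R ∧ f' u < 0})
    (ρ : ℝ) (hρ : ρ = sSup {u : ℝ | u ∈ Set.Ioo (0 : ℝ) ν ∧ f u / (u * f' u) - 1 < 1})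
    (tseq : ℕ → ℝ) (ht0 : tseq 0 ∈ Set.Ioo (0 : ℝ) ρ)
    (htk : ∀ k : ℕ, tseq (k + 1) = |tseq k - f (tseq k) / f' (tseq k)|) :
    StrictAnti tseq ∧ (∀ k : ℕ, tseq k ∈ Set.Ioo (0 : ℝ) ρ) ∧
      Filter.Tendsto tseq Filter.atTop (nhds 0) ∧
      StrictAnti (fun k : ℕ => tseq (k + 1) / tseq k ^ 2) ∧
      ∀ k : ℕ, tseq (k + 1) / tseq k ^ 2 ≤ f'' (tseq 0) / (2 * |f' (tseq 0)|) :=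
  majorant_sequence_convergence_general R f f' f'' hfd1 hfd2 hf0 hfconv hfmono ν hν ρ hρ tseq ht0
    htk
end

section
/- Let H be a real Hilbert space, Ω ⊆ H open, F : Ω → H continuously Fréchet differentiable, x* ∈ Ω, R > 0, and κ := sup{t ∈ [0, R) : B(x*, t) ⊂ Ω}. Suppose the symmetrization F̂'(x*) := (F'(x*) + F'(x*)*)/2 has a bounded linear inverse, and suppose f : [0, R) → ℝ is twice continuously differentiable with f(0) = 0, f'(0) = −1, f' convex and strictly increasing, satisfying the majorant condition ‖F̂'(x*)⁻¹‖ · ‖F'(x) − F'(x* + τ(x − x*))‖ ≤ f'(‖x − x*‖) − f'(τ‖x − x*‖) for all τ ∈ [0, 1] and all x ∈ B(x*, κ). Then for all x ∈ B(x*, κ), the linearization error E_F(x, x*) := F(x*) − [F(x) + F'(x)(x* − x)] satisfies ‖F̂'(x*)⁻¹‖ · ‖E_F(x, x*)‖ ≤ e_f(‖x − x*‖, 0), where e_f(t, u) := f(u) − [f(t) + f'(t)(u − t)]. -/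
/-!
Along the segment `τ ↦ x + τ • (x* - x)`, the error `E_F(x, x + τ • (x* - x))` vanishes at `τ = 0`
and has derivative `(F'(x + τ • (x* - x)) - F' x) (x* - x)`. The majorant condition bounds its norm,
scaled by `‖F̂'(x*)⁻¹‖`, by the derivative of the scalar error `e_f(r, (1 - τ) r)`, `r = ‖x - x*‖`,
so the fencing form of the mean value inequality compares the two errors at `τ = 1`.
-/

open RealInnerProductSpace Filter Metric Set

theorem exists_ball_subset_of_lt_sSup {X : Type*} [PseudoMetricSpace X] {Ω : Set X} {x : X}
    {R r : ℝ} (hr : 0 ≤ r) (h : r < sSup {u : ℝ | u ∈ Ico (0 : ℝ) R ∧ ball x u ⊆ Ω}) :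
    ∃ u, r < u ∧ u < R ∧ ball x u ⊆ Ω := by
  have hne : {u : ℝ | u ∈ Ico (0 : ℝ) R ∧ ball x u ⊆ Ω}.Nonempty := by
    by_contra hempty
    rw [not_nonempty_iff_eq_empty.mp hempty, Real.sSup_empty] at h
    exact h.not_ge hr
  obtain ⟨u, ⟨⟨-, huR⟩, hu⟩, hru⟩ := exists_lt_of_lt_csSup hne h
  exact ⟨u, hru, huR, hu⟩

section LinearizationError

variable {E G : Type*} [NormedAddCommGroup E] [NormedSpace ℝ E] [NormedAddCommGroup G]
  [NormedSpace ℝ G]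

def linearizationError (F : E → G) (F' : E → E →L[ℝ] G) (x y : E) : G :=
  F y - (F x + F' x (y - x))

def linearizationErrorReal (f f' : ℝ → ℝ) (t u : ℝ) : ℝ :=
  f u - (f t + f' t * (u - t))

theorem hasDerivAt_linearizationError_lineMap {F : E → G} {F' : E → E →L[ℝ] G} {x y : E}
    {τ : ℝ} (hF : HasFDerivAt F (F' (x + τ • (y - x))) (x + τ • (y - x))) :
    HasDerivAt (fun τ : ℝ => linearizationError F F' x (x + τ • (y - x)))
      ((F' (x + τ • (y - x)) - F' x) (y - x)) τ := by
  have hγ : HasDerivAt (fun τ : ℝ => x + τ • (y - x)) (y - x) τ := by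
    simpa using ((hasDerivAt_id τ).smul_const (y - x)).const_add x
  have hlin := ((F' x).hasFDerivAt.comp_hasDerivAt τ (hγ.sub_const x)).const_add (F x)
  exact ((hF.comp_hasDerivAt τ hγ).sub hlin).congr_deriv (by simp)

theorem hasDerivAt_linearizationErrorReal_lineMap {f f' : ℝ → ℝ} {t u τ : ℝ}
    (hf : HasDerivAt f (f' (t + τ * (u - t))) (t + τ * (u - t))) :
    HasDerivAt (fun τ : ℝ => linearizationErrorReal f f' t (t + τ * (u - t)))
      ((f' (t + τ * (u - t)) - f' t) * (u - t)) τ := by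
  have hγ : HasDerivAt (fun τ : ℝ => t + τ * (u - t)) (u - t) τ := by
    simpa using ((hasDerivAt_id τ).mul_const (u - t)).const_add t
  have hlin := ((hγ.sub_const t).const_mul (f' t)).const_add (f t)
  exact ((hf.comp τ hγ).sub hlin).congr_deriv (by ring)

theorem continuousOn_linearizationErrorReal_lineMap {f f' : ℝ → ℝ} {R t u : ℝ}
    (hf : ContinuousOn f (Ico 0 R)) (ht : t ∈ Ico 0 R) (hu : u ∈ Ico 0 R) :
    ContinuousOn (fun τ : ℝ => linearizationErrorReal f f' t (t + τ * (u - t))) (Icc 0 1) := by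
  have hmaps : MapsTo (fun τ : ℝ => t + τ * (u - t)) (Icc 0 1) (Ico 0 R) := fun τ hτ =>
    (convex_Ico 0 R).add_smul_sub_mem ht hu hτ
  exact (hf.comp (by fun_prop) hmaps).sub (by fun_prop)

theorem norm_linearizationError_le_of_majorant {F : E → G} {F' : E → E →L[ℝ] G} {x y : E}
    {c R : ℝ} {f f' : ℝ → ℝ}
    (hF : ∀ τ ∈ Icc (0 : ℝ) 1, HasFDerivAt F (F' (y + τ • (x - y))) (y + τ • (x - y)))
    (hf : ∀ t ∈ Ico (0 : ℝ) R, HasDerivWithinAt f (f' t) (Ico (0 : ℝ) R) t)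
    (hc : 0 ≤ c) (hxy : ‖x - y‖ < R)
    (hmaj : ∀ τ ∈ Icc (0 : ℝ) 1,
      c * ‖F' x - F' (y + τ • (x - y))‖ ≤ f' ‖x - y‖ - f' (τ * ‖x - y‖)) :
    c * ‖linearizationError F F' x y‖ ≤ linearizationErrorReal f f' ‖x - y‖ 0 := by
  obtain hr0 | hr0 := (norm_nonneg (x - y)).eq_or_lt
  · obtain rfl : x = y := sub_eq_zero.mp (norm_eq_zero.mp hr0.symm)
    simp [linearizationError, linearizationErrorReal]
  set r := ‖x - y‖ with hr
  have hseg : ∀ τ : ℝ, x + τ • (y - x) = y + (1 - τ) • (x - y) := fun τ => by module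
  have hsegR : ∀ τ : ℝ, r + τ * (0 - r) = (1 - τ) * r := fun τ => by ring
  have hφ : ∀ τ ∈ Icc (0 : ℝ) 1,
      HasDerivAt (fun τ : ℝ => c • linearizationError F F' x (x + τ • (y - x)))
        (c • (F' (x + τ • (y - x)) - F' x) (y - x)) τ := by
    intro τ hτ
    have hτ' : 1 - τ ∈ Icc (0 : ℝ) 1 := ⟨by linarith [hτ.2], by linarith [hτ.1]⟩
    refine (hasDerivAt_linearizationError_lineMap ?_).const_smul c
    rw [hseg]
    exact hF _ hτ'
  have hB := continuousOn_linearizationErrorReal_lineMap (f' := f')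
    (fun t ht => (hf t ht).continuousWithinAt) ⟨hr0.le, hxy⟩ ⟨le_rfl, hr0.trans hxy⟩
  have hB' : ∀ τ ∈ Ico (0 : ℝ) 1,
      HasDerivAt (fun τ : ℝ => linearizationErrorReal f f' r (r + τ * (0 - r)))
        ((f' (r + τ * (0 - r)) - f' r) * (0 - r)) τ := by
    intro τ hτ
    have hs : r + τ * (0 - r) ∈ Ioo 0 R := by
      rw [hsegR]
      exact ⟨by nlinarith [hτ.2], by nlinarith [hτ.1]⟩
    exact hasDerivAt_linearizationErrorReal_lineMap
      ((hf _ (Ioo_subset_Ico_self hs)).hasDerivAt (Ico_mem_nhds hs.1 hs.2))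
  have hbound : ∀ τ ∈ Ico (0 : ℝ) 1,
      ‖c • (F' (x + τ • (y - x)) - F' x) (y - x)‖ ≤ (f' (r + τ * (0 - r)) - f' r) * (0 - r) := by
    intro τ hτ
    have hτ' : 1 - τ ∈ Icc (0 : ℝ) 1 := ⟨by linarith [hτ.2], by linarith [hτ.1]⟩
    calc ‖c • (F' (x + τ • (y - x)) - F' x) (y - x)‖
        ≤ c * (‖F' x - F' (x + τ • (y - x))‖ * r) := by
          rw [norm_smul, Real.norm_of_nonneg hc, norm_sub_rev (F' x), hr, ← norm_neg (x - y),
            neg_sub]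
          gcongr
          exact ContinuousLinearMap.le_opNorm _ _
      _ ≤ (f' r - f' ((1 - τ) * r)) * r := by
          rw [← mul_assoc, hseg]
          gcongr
          exact hmaj _ hτ'
      _ = (f' (r + τ * (0 - r)) - f' r) * (0 - r) := by rw [hsegR]; ring
  have key := image_norm_le_of_norm_deriv_right_le_deriv_boundary'
    (fun τ hτ => (hφ τ hτ).continuousAt.continuousWithinAt)
    (fun τ hτ => (hφ τ (Ico_subset_Icc_self hτ)).hasDerivWithinAt)
    (by simp [linearizationError, linearizationErrorReal]) hB
    (fun τ hτ => (hB' τ hτ).hasDerivWithinAt) hbound (right_mem_Icc.mpr zero_le_one)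
  simpa [norm_smul, abs_of_nonneg hc] using key

end LinearizationError

theorem linearization_error_bound_general {H : Type*} [NormedAddCommGroup H] [InnerProductSpace ℝ H]
    (Ω : Set H) (F : H → H) (F' : H → H →L[ℝ] H)
    (hFd : ∀ x ∈ Ω, HasFDerivAt F (F' x) x)
    (xs : H)
    (R : ℝ) (κ : ℝ)
    (hκ : κ = sSup {u : ℝ | u ∈ Set.Ico (0 : ℝ) R ∧ Metric.ball xs u ⊆ Ω})
    (Ginv : H →L[ℝ] H)
    (f f' : ℝ → ℝ)
    (hfd1 : ∀ t ∈ Set.Ico (0 : ℝ) R, HasDerivWithinAt f (f' t) (Set.Ico (0 : ℝ) R) t)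
    (hmaj : ∀ τ ∈ Set.Icc (0 : ℝ) 1, ∀ x ∈ Metric.ball xs κ,
      ‖Ginv‖ * ‖F' x - F' (xs + τ • (x - xs))‖ ≤ f' ‖x - xs‖ - f' (τ * ‖x - xs‖))
    :
    ∀ x ∈ Metric.ball xs κ,
      ‖Ginv‖ * ‖F xs - (F x + (F' x) (xs - x))‖ ≤
        f 0 - (f ‖x - xs‖ + f' ‖x - xs‖ * (0 - ‖x - xs‖)) := by
  intro x hx
  have hxκ : ‖x - xs‖ < κ := mem_ball_iff_norm.mp hx
  rw [hκ] at hxκ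
  obtain ⟨u, hxu, huR, hball⟩ := exists_ball_subset_of_lt_sSup (norm_nonneg _) hxκ
  have hseg : ∀ τ ∈ Icc (0 : ℝ) 1, xs + τ • (x - xs) ∈ ball xs u := fun τ hτ =>
    (convex_ball xs u).add_smul_sub_mem (mem_ball_self ((norm_nonneg _).trans_lt hxu))
      (mem_ball_iff_norm.mpr hxu) hτ
  exact norm_linearizationError_le_of_majorant (fun τ hτ => hFd _ (hball (hseg τ hτ))) hfd1
    (norm_nonneg Ginv) (hxu.trans huR) (fun τ hτ => hmaj τ hτ x hx)

theorem linearization_error_bound {H : Type*} [NormedAddCommGroup H] [InnerProductSpace ℝ H] [CompleteSpace H]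
    (Ω : Set H) (hΩ : IsOpen Ω) (F : H → H) (F' : H → H →L[ℝ] H)
    (hFd : ∀ x ∈ Ω, HasFDerivAt F (F' x) x) (hF'c : ContinuousOn F' Ω)
    (xs : H) (hxs : xs ∈ Ω)
    (R : ℝ) (hR : 0 < R) (κ : ℝ)
    (hκ : κ = sSup {u : ℝ | u ∈ Set.Ico (0 : ℝ) R ∧ Metric.ball xs u ⊆ Ω})
    (Ahat : H →L[ℝ] H)
    (hAhat : Ahat = (1 / 2 : ℝ) • (F' xs + ContinuousLinearMap.adjoint (F' xs)))
    (Ginv : H →L[ℝ] H)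
    (hGinv1 : Ginv.comp Ahat = ContinuousLinearMap.id ℝ H)
    (hGinv2 : Ahat.comp Ginv = ContinuousLinearMap.id ℝ H)
    (f f' f'' : ℝ → ℝ)
    (hfd1 : ∀ t ∈ Set.Ico (0 : ℝ) R, HasDerivWithinAt f (f' t) (Set.Ico (0 : ℝ) R) t)
    (hfd2 : ∀ t ∈ Set.Ico (0 : ℝ) R, HasDerivWithinAt f' (f'' t) (Set.Ico (0 : ℝ) R) t)
    (hfc : ContinuousOn f'' (Set.Ico (0 : ℝ) R))
    (hf0 : f 0 = 0) (hf'0 : f' 0 = -1)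
    (hfconv : ConvexOn ℝ (Set.Ico (0 : ℝ) R) f')
    (hfmono : StrictMonoOn f' (Set.Ico (0 : ℝ) R))
    (hmaj : ∀ τ ∈ Set.Icc (0 : ℝ) 1, ∀ x ∈ Metric.ball xs κ,
      ‖Ginv‖ * ‖F' x - F' (xs + τ • (x - xs))‖ ≤ f' ‖x - xs‖ - f' (τ * ‖x - xs‖))
    :
    ∀ x ∈ Metric.ball xs κ,
      ‖Ginv‖ * ‖F xs - (F x + (F' x) (xs - x))‖ ≤
        f 0 - (f ‖x - xs‖ + f' ‖x - xs‖ * (0 - ‖x - xs‖)) :=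
  linearization_error_bound_general Ω F F' hFd xs R κ hκ Ginv f f' hfd1 hmaj
end

section
/- Let H be a real Hilbert space, Ω ⊆ H open, F : Ω → H continuously Fréchet differentiable, x* ∈ Ω, R > 0, and κ := sup{t ∈ [0, R) : B(x*, t) ⊂ Ω}. Suppose the symmetrization F̂'(x*) := (F'(x*) + F'(x*)*)/2 is a positive operator possessing a bounded linear inverse, and suppose f : [0, R) → ℝ is twice continuously differentiable with f(0) = 0, f'(0) = −1, f' convex and strictly increasing, satisfying ‖F̂'(x*)⁻¹‖ · ‖F'(x) − F'(x* + τ(x − x*))‖ ≤ f'(‖x − x*‖) − f'(τ‖x − x*‖) for all τ ∈ [0, 1], x ∈ B(x*, κ). Let ν := sup{t ∈ [0, R) : f'(t) < 0}. Then for every x with ‖x − x*‖ < min{κ, ν}, the operator F̂'(x) := (F'(x) + F'(x)*)/2 is a positive operator, has a bounded linear inverse, and ‖F̂'(x)⁻¹‖ ≤ ‖F̂'(x*)⁻¹‖ / |f'(‖x − x*‖)|. -/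
open RealInnerProductSpace Filter Metric Set

section Aux
variable {H : Type*} [NormedAddCommGroup H] [InnerProductSpace ℝ H] [CompleteSpace H]

lemma aux_cs (A : H →L[ℝ] H) (hAsa : ContinuousLinearMap.adjoint A = A)
    (hApos : ∀ y : H, 0 ≤ ⟪A y, y⟫) (y z : H) :
    ⟪A y, z⟫ ^ 2 ≤ ⟪A y, y⟫ * ⟪A z, z⟫ := by
  have hsymm : ∀ u v : H, ⟪A u, v⟫ = ⟪A v, u⟫ := by
    intro u v
    conv_lhs => rw [← hAsa]
    rw [ContinuousLinearMap.adjoint_inner_left, real_inner_comm]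
  have h : ∀ t : ℝ, 0 ≤ ⟪A z, z⟫ * (t * t) + (2 * ⟪A y, z⟫) * t + ⟪A y, y⟫ := by
    intro t
    have hpos := hApos (y + t • z)
    have hA : A (y + t • z) = A y + t • A z := by rw [map_add, map_smul]
    simp only [hA, inner_add_left, inner_add_right, real_inner_smul_left,
      real_inner_smul_right, hsymm z y] at hpos
    nlinarith [hpos]
  have hd := discrim_le_zero h
  rw [discrim] at hd
  nlinarith [hd]

lemma aux_coercive (A Ginv : H →L[ℝ] H)
    (hGinv2 : A.comp Ginv = ContinuousLinearMap.id ℝ H)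
    (hAsa : ContinuousLinearMap.adjoint A = A)
    (hApos : ∀ y : H, 0 ≤ ⟪A y, y⟫) (y : H) :
    ‖y‖ ^ 2 ≤ ‖Ginv‖ * ⟪A y, y⟫ := by
  have hAG : A (Ginv y) = y := by
    have := congrArg (fun T : H →L[ℝ] H => T y) hGinv2
    simpa using this
  have h1 : ⟪A (Ginv y), y⟫ ^ 2 ≤ ⟪A (Ginv y), Ginv y⟫ * ⟪A y, y⟫ :=
    aux_cs A hAsa hApos (Ginv y) y
  rw [hAG] at h1
  have h2 : ⟪y, Ginv y⟫ ≤ ‖Ginv‖ * ‖y‖ ^ 2 := by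
    calc ⟪y, Ginv y⟫ ≤ ‖y‖ * ‖Ginv y‖ := real_inner_le_norm _ _
      _ ≤ ‖y‖ * (‖Ginv‖ * ‖y‖) := by
          exact mul_le_mul_of_nonneg_left (Ginv.le_opNorm y) (norm_nonneg _)
      _ = ‖Ginv‖ * ‖y‖ ^ 2 := by ring
  rw [real_inner_self_eq_norm_sq] at h1
  rcases eq_or_lt_of_le (norm_nonneg y) with h0 | h0
  · have h00 : ‖y‖ = 0 := h0.symm
    rw [h00]
    nlinarith [mul_nonneg (norm_nonneg Ginv) (hApos y)]
  · have hy2 : (0:ℝ) < ‖y‖ ^ 2 := by positivity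
    nlinarith [hApos y, h1, h2]

end Aux

set_option maxHeartbeats 1600000 in
theorem symmetrization_positive_and_invertible {H : Type*} [NormedAddCommGroup H] [InnerProductSpace ℝ H] [CompleteSpace H]
    (Ω : Set H) (hΩ : IsOpen Ω) (F : H → H) (F' : H → H →L[ℝ] H)
    (hFd : ∀ x ∈ Ω, HasFDerivAt F (F' x) x) (hF'c : ContinuousOn F' Ω)
    (xs : H) (hxs : xs ∈ Ω)
    (R : ℝ) (hR : 0 < R) (κ : ℝ)
    (hκ : κ = sSup {u : ℝ | u ∈ Set.Ico (0 : ℝ) R ∧ Metric.ball xs u ⊆ Ω})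
    (Ahat : H →L[ℝ] H)
    (hAhat : Ahat = (1 / 2 : ℝ) • (F' xs + ContinuousLinearMap.adjoint (F' xs)))
    (Ginv : H →L[ℝ] H)
    (hGinv1 : Ginv.comp Ahat = ContinuousLinearMap.id ℝ H)
    (hGinv2 : Ahat.comp Ginv = ContinuousLinearMap.id ℝ H)
    (hAsa : ContinuousLinearMap.adjoint Ahat = Ahat)
    (hApos : ∀ y : H, 0 ≤ ⟪Ahat y, y⟫)
    (f f' f'' : ℝ → ℝ)
    (hfd1 : ∀ t ∈ Set.Ico (0 : ℝ) R, HasDerivWithinAt f (f' t) (Set.Ico (0 : ℝ) R) t)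
    (hfd2 : ∀ t ∈ Set.Ico (0 : ℝ) R, HasDerivWithinAt f' (f'' t) (Set.Ico (0 : ℝ) R) t)
    (hfc : ContinuousOn f'' (Set.Ico (0 : ℝ) R))
    (hf0 : f 0 = 0) (hf'0 : f' 0 = -1)
    (hfconv : ConvexOn ℝ (Set.Ico (0 : ℝ) R) f')
    (hfmono : StrictMonoOn f' (Set.Ico (0 : ℝ) R))
    (hmaj : ∀ τ ∈ Set.Icc (0 : ℝ) 1, ∀ x ∈ Metric.ball xs κ,
      ‖Ginv‖ * ‖F' x - F' (xs + τ • (x - xs))‖ ≤ f' ‖x - xs‖ - f' (τ * ‖x - xs‖))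
    (ν : ℝ) (hν : ν = sSup {u : ℝ | u ∈ Set.Ico (0 : ℝ) R ∧ f' u < 0})
    :
    ∀ x : H, ‖x - xs‖ < min κ ν →
      (ContinuousLinearMap.adjoint ((1 / 2 : ℝ) • (F' x + ContinuousLinearMap.adjoint (F' x))) =
          (1 / 2 : ℝ) • (F' x + ContinuousLinearMap.adjoint (F' x)) ∧
        ∀ y : H, 0 ≤ ⟪((1 / 2 : ℝ) • (F' x + ContinuousLinearMap.adjoint (F' x))) y, y⟫) ∧
      ∃ Binv : H →L[ℝ] H,
        Binv.comp ((1 / 2 : ℝ) • (F' x + ContinuousLinearMap.adjoint (F' x))) =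
            ContinuousLinearMap.id ℝ H ∧
          ((1 / 2 : ℝ) • (F' x + ContinuousLinearMap.adjoint (F' x))).comp Binv =
            ContinuousLinearMap.id ℝ H ∧
          ‖Binv‖ ≤ ‖Ginv‖ / |f' ‖x - xs‖| := by
  intro x hx
  set t₀ : ℝ := ‖x - xs‖ with ht₀
  have ht₀0 : 0 ≤ t₀ := norm_nonneg _
  have hxκ : t₀ < κ := lt_of_lt_of_le hx (min_le_left _ _)
  have hxν : t₀ < ν := lt_of_lt_of_le hx (min_le_right _ _)
  -- f' t₀ < 0 and t₀ ∈ Ico 0 R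
  have hSne : {u : ℝ | u ∈ Set.Ico (0 : ℝ) R ∧ f' u < 0}.Nonempty := by
    by_contra h
    rw [Set.not_nonempty_iff_eq_empty] at h
    rw [hν, h, Real.sSup_empty] at hxν
    exact absurd hxν (not_lt.2 ht₀0)
  have hSbdd : BddAbove {u : ℝ | u ∈ Set.Ico (0 : ℝ) R ∧ f' u < 0} :=
    ⟨R, fun u hu => le_of_lt hu.1.2⟩
  obtain ⟨u, huS, htu⟩ : ∃ u ∈ {u : ℝ | u ∈ Set.Ico (0 : ℝ) R ∧ f' u < 0}, t₀ < u :=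
    exists_lt_of_lt_csSup hSne (hν ▸ hxν)
  have ht₀R : t₀ ∈ Set.Ico (0 : ℝ) R := ⟨ht₀0, lt_trans htu huS.1.2⟩
  have hf'neg : f' t₀ < 0 := lt_trans (hfmono ht₀R huS.1 htu) huS.2
  have hf'ge : -1 ≤ f' t₀ := by
    have := hfmono.monotoneOn ⟨le_refl (0:ℝ), hR⟩ ht₀R ht₀0
    rw [hf'0] at this; exact this
  -- majorant at τ = 0
  have hxball : x ∈ Metric.ball xs κ := by rwa [Metric.mem_ball, dist_eq_norm]
  have hE : ‖Ginv‖ * ‖F' x - F' xs‖ ≤ f' t₀ + 1 := by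
    have := hmaj 0 ⟨le_refl 0, zero_le_one⟩ x hxball
    simpa [hf'0, sub_neg_eq_add] using this
  set B : H →L[ℝ] H := (1 / 2 : ℝ) • (F' x + ContinuousLinearMap.adjoint (F' x)) with hB
  set D : H →L[ℝ] H := B - Ahat with hD
  have hadj_norm : ∀ T : H →L[ℝ] H, ‖ContinuousLinearMap.adjoint T‖ = ‖T‖ := fun T =>
    LinearIsometryEquiv.norm_map ContinuousLinearMap.adjoint T
  have hDeq : D = (1 / 2 : ℝ) • ((F' x - F' xs) +
      ContinuousLinearMap.adjoint (F' x - F' xs)) := by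
    rw [hD, hB, hAhat, map_sub]
    module
  have hDnorm : ‖D‖ ≤ ‖F' x - F' xs‖ := by
    rw [hDeq]
    refine ContinuousLinearMap.opNorm_le_bound _ (norm_nonneg _) fun y => ?_
    simp only [ContinuousLinearMap.smul_apply, ContinuousLinearMap.add_apply]
    rw [norm_smul]
    have h1 : ‖(F' x - F' xs) y‖ ≤ ‖F' x - F' xs‖ * ‖y‖ := (F' x - F' xs).le_opNorm y
    have h2 : ‖(ContinuousLinearMap.adjoint (F' x - F' xs)) y‖ ≤ ‖F' x - F' xs‖ * ‖y‖ := by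
      have := (ContinuousLinearMap.adjoint (F' x - F' xs)).le_opNorm y
      rwa [hadj_norm] at this
    have h3 : ‖(F' x - F' xs) y + (ContinuousLinearMap.adjoint (F' x - F' xs)) y‖ ≤
        ‖F' x - F' xs‖ * ‖y‖ + ‖F' x - F' xs‖ * ‖y‖ := le_trans (norm_add_le _ _) (by linarith)
    have h4 : ‖(1/2 : ℝ)‖ = 1/2 := by norm_num
    rw [h4]
    linarith
  have hGD : ‖Ginv‖ * ‖D‖ ≤ f' t₀ + 1 := by
    calc ‖Ginv‖ * ‖D‖ ≤ ‖Ginv‖ * ‖F' x - F' xs‖ := by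
          exact mul_le_mul_of_nonneg_left hDnorm (norm_nonneg _)
      _ ≤ f' t₀ + 1 := hE
  -- self-adjointness of B
  have hBsa : ContinuousLinearMap.adjoint B = B := by
    rw [hB, map_smul, map_add, ContinuousLinearMap.adjoint_adjoint, add_comm]
  refine ⟨⟨hBsa, ?_⟩, ?_⟩
  · -- positivity
    intro y
    by_cases hG0 : Ginv = 0
    · have hy : y = 0 := by
        have := congrArg (fun T : H →L[ℝ] H => T y) hGinv1
        simpa [hG0] using this.symm
      simp [hy]
    · have hGpos : 0 < ‖Ginv‖ := norm_pos_iff.2 hG0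
      have hco : ‖y‖ ^ 2 ≤ ‖Ginv‖ * ⟪Ahat y, y⟫ :=
        aux_coercive Ahat Ginv hGinv2 hAsa hApos y
      have hDy : -(‖D‖ * ‖y‖ ^ 2) ≤ ⟪D y, y⟫ := by
        have h1 : |⟪D y, y⟫| ≤ ‖D y‖ * ‖y‖ := abs_real_inner_le_norm _ _
        have h2 : ‖D y‖ * ‖y‖ ≤ ‖D‖ * ‖y‖ ^ 2 := by
          have := D.le_opNorm y
          nlinarith [norm_nonneg y]
        have := neg_abs_le ⟪D y, y⟫
        linarith [abs_le.1 h1]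
      have hBAD : (B : H →L[ℝ] H) y = Ahat y + D y := by
        simp [hD]
      have hinner : ⟪B y, y⟫ = ⟪Ahat y, y⟫ + ⟪D y, y⟫ := by
        rw [hBAD, inner_add_left]
      have key : 0 ≤ ‖Ginv‖ * ⟪B y, y⟫ := by
        rw [hinner, mul_add]
        have h3 : -(‖Ginv‖ * (‖D‖ * ‖y‖ ^ 2)) ≤ ‖Ginv‖ * ⟪D y, y⟫ := by
          have h5 := mul_le_mul_of_nonneg_left hDy (norm_nonneg Ginv)
          rwa [mul_neg] at h5
        have h4 : ‖Ginv‖ * ‖D‖ * ‖y‖ ^ 2 ≤ (f' t₀ + 1) * ‖y‖ ^ 2 :=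
          mul_le_mul_of_nonneg_right hGD (sq_nonneg _)
        have h6 : ‖Ginv‖ * (‖D‖ * ‖y‖ ^ 2) = ‖Ginv‖ * ‖D‖ * ‖y‖ ^ 2 := by ring
        have h7 : 0 ≤ -(f' t₀) * ‖y‖ ^ 2 := mul_nonneg (by linarith) (sq_nonneg _)
        linarith [hco]
      nlinarith [hGpos]
  · -- invertibility
    have hAG1 : Ginv * Ahat = 1 := hGinv1
    have hAG2 : Ahat * Ginv = 1 := hGinv2
    set T : H →L[ℝ] H := Ginv * D with hT
    have hTn : ‖T‖ ≤ f' t₀ + 1 := le_trans (norm_mul_le _ _) hGD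
    have hTlt : ‖-T‖ < 1 := by rw [norm_neg]; linarith
    set S : H →L[ℝ] H := ∑' n : ℕ, (-T) ^ n with hS
    have hS1 : S * (1 + T) = 1 := by
      have := geom_series_mul_neg (-T) hTlt
      rwa [sub_neg_eq_add] at this
    have hS2 : (1 + T) * S = 1 := by
      have := mul_neg_geom_series (-T) hTlt
      rwa [sub_neg_eq_add] at this
    have hSnorm : ‖S‖ ≤ (1 - ‖T‖)⁻¹ := by
      have h0 := tsum_geometric_le_of_norm_lt_one (-T) hTlt
      rw [norm_neg] at h0
      have h1 : ‖(1 : H →L[ℝ] H)‖ ≤ 1 := ContinuousLinearMap.norm_id_le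
      rw [hS]
      linarith
    have hBfact : B = Ahat * (1 + T) := by
      rw [mul_add, mul_one, hT, ← mul_assoc, hAG2, one_mul, hD]
      abel
    refine ⟨S * Ginv, ?_, ?_, ?_⟩
    · show (S * Ginv) * B = 1
      rw [hBfact, ← mul_assoc, mul_assoc S Ginv Ahat, hAG1, mul_one, hS1]
    · show B * (S * Ginv) = 1
      rw [hBfact, mul_assoc, ← mul_assoc (1 + T) S Ginv, hS2, one_mul, hAG2]
    · have habs : |f' t₀| = -(f' t₀) := abs_of_neg hf'neg
      have hpos : 0 < -(f' t₀) := by linarith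
      have hfrac : (1 - ‖T‖)⁻¹ ≤ (-(f' t₀))⁻¹ := by
        apply inv_anti₀ hpos
        linarith
      calc ‖S * Ginv‖ ≤ ‖S‖ * ‖Ginv‖ := norm_mul_le _ _
        _ ≤ (-(f' t₀))⁻¹ * ‖Ginv‖ := by
            apply mul_le_mul_of_nonneg_right _ (norm_nonneg _)
            exact le_trans hSnorm hfrac
        _ = ‖Ginv‖ / |f' t₀| := by rw [habs]; ring
end

section
/- Let H be a real Hilbert space, Ω ⊆ H open, F : Ω → H continuously Fréchet differentiable, T : H ⇉ H a maximal monotone set-valued operator, and x* ∈ Ω with 0 ∈ F(x*) + T(x*). Suppose F̂'(x*) := (F'(x*) + F'(x*)*)/2 is a positive operator with bounded linear inverse, and f : [0, R) → ℝ (R > 0) is twice continuously differentiable with f(0) = 0, f'(0) = −1, f' convex and strictly increasing, satisfying ‖F̂'(x*)⁻¹‖ · ‖F'(x) − F'(x* + τ(x − x*))‖ ≤ f'(‖x − x*‖) − f'(τ‖x − x*‖) for all τ ∈ [0, 1], x ∈ B(x*, κ), where κ := sup{t ∈ [0, R) : B(x*, t) ⊂ Ω}. Set ν := sup{t ∈ [0,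 R) : f'(t) < 0}, n_f(t) := t − f(t)/f'(t), ρ := sup{t ∈ (0, ν) : f(t)/(t f'(t)) − 1 < 1}, and r := min{κ, ρ}. Fix 0 < t < r, let x ∈ Ω with ‖x − x*‖ ≤ t, and let y ∈ H satisfy 0 ∈ F(x) + F'(x)(y − x) + T(y). Then ‖y − x*‖ ≤ (|n_f(t)|/t²) · ‖x − x*‖² ≤ |n_f(t)|; in particular ‖y − x*‖ < r whenever ‖x − x*‖ < r. -/
open RealInnerProductSpace Filter Metric Set

/-- A set-valued operator `T : H ⇉ H` is monotone if `⟨u - v, y - x⟩ ≥ 0` whenever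
`u ∈ T y` and `v ∈ T x`; it is maximal monotone if moreover every pair `(x, u)` that is
monotonically related to the graph of `T` belongs to the graph of `T`. -/
def IsMaximalMonotone {H : Type*} [NormedAddCommGroup H] [InnerProductSpace ℝ H]
    (T : H → Set H) : Prop :=
  (∀ x y u v : H, u ∈ T y → v ∈ T x → 0 ≤ ⟪u - v, y - x⟫) ∧
  (∀ x u : H, (∀ y v : H, v ∈ T y → 0 ≤ ⟪u - v, x - y⟫) → u ∈ T x)

private lemma coercive_aux {H : Type*} [NormedAddCommGroup H] [InnerProductSpace ℝ H]
    [CompleteSpace H] (Ahat Ginv : H →L[ℝ] H)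
    (hGinv2 : Ahat.comp Ginv = ContinuousLinearMap.id ℝ H)
    (hAsa : ContinuousLinearMap.adjoint Ahat = Ahat)
    (hApos : ∀ y : H, 0 ≤ ⟪Ahat y, y⟫) (z : H) :
    ‖z‖ ^ 2 ≤ ‖Ginv‖ * ⟪Ahat z, z⟫ := by
  have hsym : ∀ v w : H, ⟪Ahat v, w⟫ = ⟪v, Ahat w⟫ := by
    intro v w
    conv_lhs => rw [← hAsa]
    exact ContinuousLinearMap.adjoint_inner_left Ahat w v
  have key : ∀ a b : H, ⟪Ahat a, b⟫ ^ 2 ≤ ⟪Ahat a, a⟫ * ⟪Ahat b, b⟫ := by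
    intro a b
    have h : ∀ lam : ℝ, 0 ≤ ⟪Ahat b, b⟫ * (lam * lam) + 2 * ⟪Ahat a, b⟫ * lam + ⟪Ahat a, a⟫ := by
      intro lam
      have h0 := hApos (a + lam • b)
      have hexp : ⟪Ahat (a + lam • b), a + lam • b⟫ =
          ⟪Ahat b, b⟫ * (lam * lam) + 2 * ⟪Ahat a, b⟫ * lam + ⟪Ahat a, a⟫ := by
        rw [map_add, map_smul]
        simp only [inner_add_left, inner_add_right, real_inner_smul_left, real_inner_smul_right]
        have hba : ⟪Ahat b, a⟫ = ⟪Ahat a, b⟫ := by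
          rw [hsym b a, real_inner_comm]
        rw [hba]; ring
      linarith [hexp ▸ h0]
    have hd := discrim_le_zero h
    rw [discrim] at hd
    nlinarith [hd]
  have heq : Ahat (Ginv z) = z := by
    have := ContinuousLinearMap.ext_iff.mp hGinv2 z
    simpa using this
  have h1 : ⟪Ahat (Ginv z), z⟫ = ‖z‖ ^ 2 := by
    rw [heq, real_inner_self_eq_norm_sq]
  have h2 : ⟪Ahat (Ginv z), Ginv z⟫ ≤ ‖Ginv‖ * ‖z‖ ^ 2 := by
    rw [heq]
    calc ⟪z, Ginv z⟫ ≤ ‖z‖ * ‖Ginv z‖ := real_inner_le_norm _ _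
      _ ≤ ‖z‖ * (‖Ginv‖ * ‖z‖) := by
          apply mul_le_mul_of_nonneg_left (Ginv.le_opNorm z) (norm_nonneg z)
      _ = ‖Ginv‖ * ‖z‖ ^ 2 := by ring
  have hk := key (Ginv z) z
  rw [h1] at hk
  rcases eq_or_lt_of_le (norm_nonneg z) with h0 | h0
  · rw [← h0]
    simpa using mul_nonneg (norm_nonneg Ginv) (hApos z)
  · have hzz : 0 < ‖z‖ ^ 2 := by positivity
    nlinarith [hk, h2, hApos z, hApos (Ginv z), hzz]

set_option maxHeartbeats 2000000 in
theorem newton_step_contraction {H : Type*} [NormedAddCommGroup H] [InnerProductSpace ℝ H] [CompleteSpace H]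
    (Ω : Set H) (hΩ : IsOpen Ω) (F : H → H) (F' : H → H →L[ℝ] H)
    (hFd : ∀ x ∈ Ω, HasFDerivAt F (F' x) x) (hF'c : ContinuousOn F' Ω)
    (xs : H) (hxs : xs ∈ Ω)
    (T : H → Set H) (hT : IsMaximalMonotone T)
    (hsol : (0 : H) ∈ (fun w => F xs + w) '' T xs)
    (Ahat : H →L[ℝ] H)
    (hAhat : Ahat = (1 / 2 : ℝ) • (F' xs + ContinuousLinearMap.adjoint (F' xs)))
    (Ginv : H →L[ℝ] H)
    (hGinv1 : Ginv.comp Ahat = ContinuousLinearMap.id ℝ H)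
    (hGinv2 : Ahat.comp Ginv = ContinuousLinearMap.id ℝ H)
    (hAsa : ContinuousLinearMap.adjoint Ahat = Ahat)
    (hApos : ∀ y : H, 0 ≤ ⟪Ahat y, y⟫)
    (R : ℝ) (hR : 0 < R) (κ : ℝ)
    (hκ : κ = sSup {u : ℝ | u ∈ Set.Ico (0 : ℝ) R ∧ Metric.ball xs u ⊆ Ω})
    (f f' f'' : ℝ → ℝ)
    (hfd1 : ∀ t ∈ Set.Ico (0 : ℝ) R, HasDerivWithinAt f (f' t) (Set.Ico (0 : ℝ) R) t)
    (hfd2 : ∀ t ∈ Set.Ico (0 : ℝ) R, HasDerivWithinAt f' (f'' t) (Set.Ico (0 : ℝ) R) t)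
    (hfc : ContinuousOn f'' (Set.Ico (0 : ℝ) R))
    (hf0 : f 0 = 0) (hf'0 : f' 0 = -1)
    (hfconv : ConvexOn ℝ (Set.Ico (0 : ℝ) R) f')
    (hfmono : StrictMonoOn f' (Set.Ico (0 : ℝ) R))
    (hmaj : ∀ τ ∈ Set.Icc (0 : ℝ) 1, ∀ x ∈ Metric.ball xs κ,
      ‖Ginv‖ * ‖F' x - F' (xs + τ • (x - xs))‖ ≤ f' ‖x - xs‖ - f' (τ * ‖x - xs‖))
    (ν : ℝ) (hν : ν = sSup {u : ℝ | u ∈ Set.Ico (0 : ℝ) R ∧ f' u < 0})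
    (ρ : ℝ) (hρ : ρ = sSup {u : ℝ | u ∈ Set.Ioo (0 : ℝ) ν ∧ f u / (u * f' u) - 1 < 1})
    (r : ℝ) (hr : r = min κ ρ)
    (t : ℝ) (htpos : 0 < t) (htr : t < r)
    (x : H) (hxΩ : x ∈ Ω) (hxt : ‖x - xs‖ ≤ t)
    (y : H) (hy : (0 : H) ∈ (fun w => F x + (F' x) (y - x) + w) '' T y) :
    ‖y - xs‖ ≤ |t - f t / f' t| / t ^ 2 * ‖x - xs‖ ^ 2 ∧
      |t - f t / f' t| / t ^ 2 * ‖x - xs‖ ^ 2 ≤ |t - f t / f' t| ∧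
      ‖y - xs‖ < r := by
  obtain ⟨hTmono, -⟩ := hT
  set s : ℝ := ‖x - xs‖ with hs_def
  set z : H := y - xs with hz_def
  have hs0 : 0 ≤ s := norm_nonneg _
  have htκ : t < κ := lt_of_lt_of_le htr (hr ▸ min_le_left _ _)
  have htρ : t < ρ := lt_of_lt_of_le htr (hr ▸ min_le_right _ _)
  -- basic facts about the suprema
  have hSρ : {u : ℝ | u ∈ Set.Ioo (0:ℝ) ν ∧ f u / (u * f' u) - 1 < 1}.Nonempty := by
    by_contra h
    rw [Set.not_nonempty_iff_eq_empty] at h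
    rw [h, Real.sSup_empty] at hρ
    linarith
  have hρν : ρ ≤ ν := by
    rw [hρ]; exact csSup_le hSρ (fun u hu => le_of_lt hu.1.2)
  have hSν : {u : ℝ | u ∈ Set.Ico (0:ℝ) R ∧ f' u < 0}.Nonempty :=
    ⟨0, ⟨le_refl 0, hR⟩, by rw [hf'0]; norm_num⟩
  have hνR : ν ≤ R := by
    rw [hν]; exact csSup_le hSν (fun u hu => le_of_lt hu.1.2)
  have htν : t < ν := lt_of_lt_of_le htρ hρν
  have htR : t < R := lt_of_lt_of_le htν hνR
  have hsν : s < ν := lt_of_le_of_lt hxt htν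
  have hsR : s < R := lt_of_le_of_lt hxt htR
  -- f' is negative on [0, ν)
  have hf'neg : ∀ u : ℝ, 0 ≤ u → u < ν → f' u < 0 := by
    intro u hu0 huν
    obtain ⟨w, hw, huw⟩ := exists_lt_of_lt_csSup hSν (hν ▸ huν)
    exact lt_trans (hfmono ⟨hu0, lt_trans huw hw.1.2⟩ hw.1 huw) hw.2
  have hf'cont : ContinuousOn f' (Set.Ico (0:ℝ) R) :=
    fun u hu => (hfd2 u hu).continuousWithinAt
  have hfcont : ContinuousOn f (Set.Ico (0:ℝ) R) :=
    fun u hu => (hfd1 u hu).continuousWithinAt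
  -- FTC
  have hFTC : ∀ u : ℝ, 0 ≤ u → u < R → ∫ τ in (0:ℝ)..u, f' τ = f u := by
    intro u hu0 huR
    have hsub : Set.Icc (0:ℝ) u ⊆ Set.Ico (0:ℝ) R :=
      fun v hv => ⟨hv.1, lt_of_le_of_lt hv.2 huR⟩
    have hint : IntervalIntegrable f' MeasureTheory.volume 0 u := by
      apply ContinuousOn.intervalIntegrable
      rw [Set.uIcc_of_le hu0]
      exact hf'cont.mono hsub
    have h := intervalIntegral.integral_eq_sub_of_hasDeriv_right_of_le hu0
      (hfcont.mono hsub)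
      (fun v hv => (((hfd1 v ⟨le_of_lt hv.1, lt_trans hv.2 huR⟩).hasDerivAt
        (Ico_mem_nhds hv.1 (lt_trans hv.2 huR))).hasDerivWithinAt)) hint
    rw [h, hf0, sub_zero]
  -- integral of f'(σ u) over [0,1]
  have hIcomp : ∀ u : ℝ, 0 ≤ u → u < R →
      ContinuousOn (fun σ : ℝ => f' (σ * u)) (Set.Icc (0:ℝ) 1) := by
    intro u hu0 huR
    apply hf'cont.comp (Continuous.continuousOn (by continuity))
    intro σ hσ
    exact ⟨mul_nonneg hσ.1 hu0, lt_of_le_of_lt (mul_le_of_le_one_left hu0 hσ.2) huR⟩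
  have hIint : ∀ u : ℝ, 0 ≤ u → u < R →
      IntervalIntegrable (fun σ : ℝ => f' (σ * u)) MeasureTheory.volume 0 1 := by
    intro u hu0 huR
    apply ContinuousOn.intervalIntegrable
    rw [Set.uIcc_of_le zero_le_one]
    exact hIcomp u hu0 huR
  have hint1 : ∀ u : ℝ, 0 < u → u < R → ∫ σ in (0:ℝ)..1, f' (σ * u) = f u / u := by
    intro u hu0 huR
    rw [intervalIntegral.integral_comp_mul_right f' (ne_of_gt hu0)]
    simp only [zero_mul, one_mul, smul_eq_mul]
    rw [hFTC u hu0.le huR]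
    ring
  -- f u ≤ u * f' u
  have hfle : ∀ u : ℝ, 0 ≤ u → u < R → f u ≤ u * f' u := by
    intro u hu0 huR
    have hsub : Set.Icc (0:ℝ) u ⊆ Set.Ico (0:ℝ) R :=
      fun v hv => ⟨hv.1, lt_of_le_of_lt hv.2 huR⟩
    have hint : IntervalIntegrable f' MeasureTheory.volume 0 u := by
      apply ContinuousOn.intervalIntegrable
      rw [Set.uIcc_of_le hu0]
      exact hf'cont.mono hsub
    have h := intervalIntegral.integral_mono_on (f := f') (g := fun _ => f' u) hu0 hint
      intervalIntegrable_const
      (fun τ hτ => hfmono.monotoneOn (hsub hτ) ⟨hu0, huR⟩ hτ.2)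
    rw [hFTC u hu0 huR, intervalIntegral.integral_const] at h
    simpa using h
  -- slope inequality
  have hslope : ∀ σ ∈ Set.Icc (0:ℝ) 1, ∀ u v : ℝ, 0 < u → u ≤ v → v < R →
      (f' u - f' (σ * u)) / u ≤ (f' v - f' (σ * v)) / v := by
    intro σ hσ u v hu0 huv hvR
    rcases eq_or_lt_of_le huv with rfl | huv
    · exact le_refl _
    rcases eq_or_lt_of_le hσ.2 with rfl | hσ1
    · simp
    have hv0 : 0 < v := lt_trans hu0 huv
    have hσu : σ * u < u := by nlinarith [hσ.1]
    have hσv : σ * v < v := by nlinarith [hσ.1]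
    have hσuv : σ * u ≤ σ * v := by nlinarith [hσ.1]
    have hmu : u ∈ Set.Ico (0:ℝ) R := ⟨hu0.le, lt_trans huv hvR⟩
    have hmv : v ∈ Set.Ico (0:ℝ) R := ⟨hv0.le, hvR⟩
    have hmσu : σ * u ∈ Set.Ico (0:ℝ) R :=
      ⟨mul_nonneg hσ.1 hu0.le, lt_trans hσu hmu.2⟩
    have hmσv : σ * v ∈ Set.Ico (0:ℝ) R :=
      ⟨mul_nonneg hσ.1 hv0.le, lt_trans hσv hvR⟩
    have h1 : (f' u - f' (σ * u)) / (u - σ * u) ≤ (f' v - f' (σ * u)) / (v - σ * u) :=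
      hfconv.secant_mono hmσu hmu hmv (ne_of_gt hσu) (ne_of_gt (lt_trans hσu huv)) huv.le
    have h2 : (f' (σ * u) - f' v) / (σ * u - v) ≤ (f' (σ * v) - f' v) / (σ * v - v) :=
      hfconv.secant_mono hmv hmσu hmσv (ne_of_lt (lt_trans hσu huv)) (ne_of_lt hσv) hσuv
    have h2' : (f' v - f' (σ * u)) / (v - σ * u) ≤ (f' v - f' (σ * v)) / (v - σ * v) := by
      rw [show f' v - f' (σ * u) = -(f' (σ * u) - f' v) by ring,
        show v - σ * u = -(σ * u - v) by ring, neg_div_neg_eq,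
        show f' v - f' (σ * v) = -(f' (σ * v) - f' v) by ring,
        show v - σ * v = -(σ * v - v) by ring, neg_div_neg_eq]
      exact h2
    have hchain := h1.trans h2'
    have hd1 : 0 < u - σ * u := by linarith
    have hd2 : 0 < v - σ * v := by linarith
    rw [div_le_div_iff₀ hd1 hd2] at hchain
    rw [div_le_div_iff₀ hu0 hv0]
    have h1σ : 0 < 1 - σ := by linarith
    have e1 : (f' u - f' (σ * u)) * v * (1 - σ) = (f' u - f' (σ * u)) * (v - σ * v) := by ring
    have e2 : (f' v - f' (σ * v)) * u * (1 - σ) = (f' v - f' (σ * v)) * (u - σ * u) := by ring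
    apply le_of_mul_le_mul_right _ h1σ
    rw [e1, e2]
    exact hchain
  -- g(u)/u^2 representation and monotonicity
  have hrep : ∀ u : ℝ, 0 < u → u < R →
      ∫ σ in (0:ℝ)..1, (f' u - f' (σ * u)) / u = (u * f' u - f u) / u ^ 2 := by
    intro u hu0 huR
    rw [intervalIntegral.integral_div]
    rw [intervalIntegral.integral_sub intervalIntegrable_const (hIint u hu0.le huR)]
    rw [intervalIntegral.integral_const, hint1 u hu0 huR]
    field_simp
    ring
  have hg2 : ∀ u v : ℝ, 0 < u → u ≤ v → v < R →
      (u * f' u - f u) / u ^ 2 ≤ (v * f' v - f v) / v ^ 2 := by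
    intro u v hu0 huv hvR
    have hv0 : 0 < v := lt_of_lt_of_le hu0 huv
    rw [← hrep u hu0 (lt_of_le_of_lt huv hvR), ← hrep v hv0 hvR]
    apply intervalIntegral.integral_mono_on zero_le_one
    · exact ((intervalIntegrable_const).sub (hIint u hu0.le (lt_of_le_of_lt huv hvR))).div_const _
    · exact ((intervalIntegrable_const).sub (hIint v hv0.le hvR)).div_const _
    · intro σ hσ
      exact hslope σ hσ u v hu0 huv hvR
  -- key strict inequality at t : t f'(t) - f(t) < t * (-f'(t))
  have hft : f' t < 0 := hf'neg t htpos.le htν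
  have hfs : f' s < 0 := hf'neg s hs0 hsν
  have hgt0 : 0 ≤ t * f' t - f t := by linarith [hfle t htpos.le htR]
  have hgs0 : 0 ≤ s * f' s - f s := by linarith [hfle s hs0 hsR]
  have hgt_lt : t * f' t - f t < t * (-(f' t)) := by
    obtain ⟨w, hw, htw⟩ := exists_lt_of_lt_csSup hSρ (hρ ▸ htρ)
    obtain ⟨⟨hw0, hwνlt⟩, hwcond⟩ := hw
    have hwR : w < R := lt_of_lt_of_le hwνlt hνR
    have hfw : f' w < 0 := hf'neg w hw0.le hwνlt
    have hwf : 0 > w * f' w := by nlinarith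
    -- translate the condition at w
    have hcond' : f w > 2 * (w * f' w) := by
      have h1 : f w / (w * f' w) < 2 := by linarith
      have := (div_lt_iff_of_neg hwf).mp h1
      linarith
    have hgww : w * f' w - f w < w * (-(f' w)) := by linarith
    -- compare g t / t^2 with g w / w^2
    have hcmp := hg2 t w htpos htw.le hwR
    have hf'tw : f' t ≤ f' w := (hfmono.monotoneOn ⟨htpos.le, htR⟩ ⟨hw0.le, hwR⟩ htw.le)
    have h1 : (t * f' t - f t) * w ^ 2 ≤ (w * f' w - f w) * t ^ 2 := by
      have := (div_le_div_iff₀ (by positivity : (0:ℝ) < t ^ 2)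
        (by positivity : (0:ℝ) < w ^ 2)).mp hcmp
      linarith
    have hgTw2 : (t * f' t - f t) * w ^ 2 < (w * (-(f' t))) * t ^ 2 := by
      have a : (w * f' w - f w) * t ^ 2 < (w * (-(f' w))) * t ^ 2 :=
        mul_lt_mul_of_pos_right hgww (by positivity)
      have b : (w * (-(f' w))) * t ^ 2 ≤ (w * (-(f' t))) * t ^ 2 := by
        have hc : w * (-(f' w)) ≤ w * (-(f' t)) :=
          mul_le_mul_of_nonneg_left (by linarith) hw0.le
        exact mul_le_mul_of_nonneg_right hc (sq_nonneg t)
      exact lt_of_le_of_lt h1 (lt_of_lt_of_le a b)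
    have hgTw : (t * f' t - f t) * w < (-(f' t)) * t ^ 2 := by
      refine lt_of_mul_lt_mul_right ?_ hw0.le
      calc (t * f' t - f t) * w * w = (t * f' t - f t) * w ^ 2 := by ring
        _ < (w * (-(f' t))) * t ^ 2 := hgTw2
        _ = (-(f' t)) * t ^ 2 * w := by ring
    have hgTt : (t * f' t - f t) * t ≤ (t * f' t - f t) * w :=
      mul_le_mul_of_nonneg_left htw.le hgt0
    refine lt_of_mul_lt_mul_right ?_ htpos.le
    calc (t * f' t - f t) * t ≤ (t * f' t - f t) * w := hgTt
      _ < (-(f' t)) * t ^ 2 := hgTw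
      _ = t * (-(f' t)) * t := by ring
  -- geometry : the segment lies in Ω and x lies in ball xs κ
  have hSκ : {u : ℝ | u ∈ Set.Ico (0:ℝ) R ∧ Metric.ball xs u ⊆ Ω}.Nonempty :=
    ⟨0, ⟨le_refl 0, hR⟩, by simp⟩
  obtain ⟨w, hwmem, htw⟩ := exists_lt_of_lt_csSup hSκ (hκ ▸ htκ)
  have hseg : ∀ σ ∈ Set.Icc (0:ℝ) 1, xs + σ • (x - xs) ∈ Ω := by
    intro σ hσ
    apply hwmem.2
    rw [Metric.mem_ball, dist_eq_norm]
    have : xs + σ • (x - xs) - xs = σ • (x - xs) := by abel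
    rw [this, norm_smul, Real.norm_of_nonneg hσ.1]
    calc σ * s ≤ 1 * s := mul_le_mul_of_nonneg_right hσ.2 hs0
      _ = s := one_mul s
      _ ≤ t := hxt
      _ < w := htw
  have hxball : x ∈ Metric.ball xs κ := by
    rw [Metric.mem_ball, dist_eq_norm]
    exact lt_of_le_of_lt hxt htκ
  -- vector-valued fundamental theorem of calculus
  have hγd : ∀ σ : ℝ, HasDerivAt (fun σ : ℝ => xs + σ • (x - xs)) (x - xs) σ := by
    intro σ
    simpa using ((hasDerivAt_id σ).smul_const (x - xs)).const_add xs
  have hγcont : Continuous (fun σ : ℝ => xs + σ • (x - xs)) := by continuity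
  have hgcont : ContinuousOn (fun σ : ℝ => (F' (xs + σ • (x - xs))) (x - xs))
      (Set.Icc (0:ℝ) 1) :=
    (hF'c.comp hγcont.continuousOn (fun σ hσ => hseg σ hσ)).clm_apply continuousOn_const
  have hFint : IntervalIntegrable (fun σ : ℝ => (F' (xs + σ • (x - xs))) (x - xs))
      MeasureTheory.volume 0 1 := by
    apply ContinuousOn.intervalIntegrable
    rw [Set.uIcc_of_le zero_le_one]
    exact hgcont
  have hFTCv : ∫ σ in (0:ℝ)..1, (F' (xs + σ • (x - xs))) (x - xs) = F x - F xs := by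
    have h := intervalIntegral.integral_eq_sub_of_hasDerivAt
      (f := fun σ : ℝ => F (xs + σ • (x - xs)))
      (f' := fun σ : ℝ => (F' (xs + σ • (x - xs))) (x - xs)) (a := 0) (b := 1)
      (fun σ hσ => by
        rw [Set.uIcc_of_le zero_le_one] at hσ
        exact (hFd _ (hseg σ hσ)).comp_hasDerivAt σ (hγd σ)) hFint
    simpa using h
  set W : H := ∫ σ in (0:ℝ)..1, ((F' x) (x - xs) - (F' (xs + σ • (x - xs))) (x - xs))
    with hW_def
  have hWeq : W = (F' x) (x - xs) - (F x - F xs) := by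
    rw [hW_def, intervalIntegral.integral_sub intervalIntegrable_const hFint,
      intervalIntegral.integral_const, hFTCv]
    simp
  -- monotonicity of T
  obtain ⟨v, hvT, hv0⟩ := hsol
  obtain ⟨u, huT, hu0⟩ := hy
  have hu' : u = -(F x + (F' x) (y - x)) := by
    have : (F x + (F' x) (y - x)) + u = 0 := hu0
    exact eq_neg_of_add_eq_zero_right this
  have hv' : v = -(F xs) := by
    have : F xs + v = 0 := hv0
    exact eq_neg_of_add_eq_zero_right this
  have hmon := hTmono xs y u v huT hvT
  have huv : u - v = W - (F' x) z := by
    rw [hu', hv', hWeq, hz_def]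
    have hde : (F' x) (y - x) = (F' x) (y - xs) - (F' x) (x - xs) := by
      rw [← map_sub]
      congr 1
      abel
    rw [hde]
    abel
  have hkey : ⟪(F' x) z, z⟫ ≤ ⟪W, z⟫ := by
    rw [huv, inner_sub_left] at hmon
    linarith
  -- quadratic form identity and lower bound
  have hAq : ∀ w : H, ⟪Ahat w, w⟫ = ⟪(F' xs) w, w⟫ := by
    intro w
    rw [hAhat]
    simp only [ContinuousLinearMap.smul_apply, ContinuousLinearMap.add_apply,
      real_inner_smul_left, inner_add_left]
    have : ⟪(ContinuousLinearMap.adjoint (F' xs)) w, w⟫ = ⟪(F' xs) w, w⟫ := by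
      rw [ContinuousLinearMap.adjoint_inner_left, real_inner_comm]
    rw [this]
    ring
  have hcoerz := coercive_aux Ahat Ginv hGinv2 hAsa hApos z
  have hB : ‖Ginv‖ * ‖F' x - F' xs‖ ≤ f' s + 1 := by
    have h := hmaj 0 ⟨le_refl 0, zero_le_one⟩ x hxball
    simp only [zero_smul, add_zero, zero_mul, hf'0] at h
    rw [← hs_def] at h
    linarith
  have hlow : -(f' s) * ‖z‖ ^ 2 ≤ ‖Ginv‖ * ⟪(F' x) z, z⟫ := by
    have h1 : ⟪(F' x) z, z⟫ = ⟪Ahat z, z⟫ + ⟪(F' x - F' xs) z, z⟫ := by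
      rw [hAq, ContinuousLinearMap.sub_apply, inner_sub_left]
      ring
    have h2 : -(‖F' x - F' xs‖ * ‖z‖ ^ 2) ≤ ⟪(F' x - F' xs) z, z⟫ := by
      have ha := abs_real_inner_le_norm ((F' x - F' xs) z) z
      have hb := (F' x - F' xs).le_opNorm z
      have hc := neg_abs_le ⟪(F' x - F' xs) z, z⟫
      nlinarith [norm_nonneg z, norm_nonneg ((F' x - F' xs) z)]
    have h3 : ‖Ginv‖ * ⟪(F' x - F' xs) z, z⟫ ≥ -(‖Ginv‖ * ‖F' x - F' xs‖ * ‖z‖ ^ 2) := by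
      have := mul_le_mul_of_nonneg_left h2 (norm_nonneg Ginv)
      nlinarith [this]
    have h4 : ‖Ginv‖ * ‖F' x - F' xs‖ * ‖z‖ ^ 2 ≤ (f' s + 1) * ‖z‖ ^ 2 :=
      mul_le_mul_of_nonneg_right hB (sq_nonneg _)
    have h5 : ‖Ginv‖ * ⟪(F' x) z, z⟫
        = ‖Ginv‖ * ⟪Ahat z, z⟫ + ‖Ginv‖ * ⟪(F' x - F' xs) z, z⟫ := by
      rw [h1]; ring
    linarith [hcoerz]
  -- upper bound on the norm of W
  have hptw : ∀ σ ∈ Set.Icc (0:ℝ) 1,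
      ‖Ginv‖ * ‖(F' x) (x - xs) - (F' (xs + σ • (x - xs))) (x - xs)‖
        ≤ (f' s - f' (σ * s)) * s := by
    intro σ hσ
    have h1 := hmaj σ hσ x hxball
    rw [← hs_def] at h1
    have h2 : ‖(F' x) (x - xs) - (F' (xs + σ • (x - xs))) (x - xs)‖
        ≤ ‖F' x - F' (xs + σ • (x - xs))‖ * s := by
      have := (F' x - F' (xs + σ • (x - xs))).le_opNorm (x - xs)
      rw [ContinuousLinearMap.sub_apply] at this
      exact this
    calc ‖Ginv‖ * ‖(F' x) (x - xs) - (F' (xs + σ • (x - xs))) (x - xs)‖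
        ≤ ‖Ginv‖ * (‖F' x - F' (xs + σ • (x - xs))‖ * s) :=
          mul_le_mul_of_nonneg_left h2 (norm_nonneg Ginv)
      _ = (‖Ginv‖ * ‖F' x - F' (xs + σ • (x - xs))‖) * s := by ring
      _ ≤ (f' s - f' (σ * s)) * s := mul_le_mul_of_nonneg_right h1 hs0
  have hWnint : IntervalIntegrable
      (fun σ : ℝ => ‖Ginv‖ * ‖(F' x) (x - xs) - (F' (xs + σ • (x - xs))) (x - xs)‖)
      MeasureTheory.volume 0 1 := by
    apply ContinuousOn.intervalIntegrable
    rw [Set.uIcc_of_le zero_le_one]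
    exact continuousOn_const.mul (continuousOn_const.sub hgcont).norm
  have hfsint : IntervalIntegrable (fun σ : ℝ => (f' s - f' (σ * s)) * s)
      MeasureTheory.volume 0 1 := by
    apply ContinuousOn.intervalIntegrable
    rw [Set.uIcc_of_le zero_le_one]
    exact (continuousOn_const.sub (hIcomp s hs0 hsR)).mul continuousOn_const
  have hintval : ∫ σ in (0:ℝ)..1, (f' s - f' (σ * s)) * s = s * f' s - f s := by
    rcases eq_or_lt_of_le hs0 with h0 | h0
    · simp [← h0, hf0]
    · rw [intervalIntegral.integral_mul_const,
        intervalIntegral.integral_sub intervalIntegrable_const (hIint s hs0 hsR),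
        intervalIntegral.integral_const, hint1 s h0 hsR]
      field_simp
      ring
  have hWnorm : ‖Ginv‖ * ‖W‖ ≤ s * f' s - f s := by
    calc ‖Ginv‖ * ‖W‖
        ≤ ‖Ginv‖ * ∫ σ in (0:ℝ)..1,
            ‖(F' x) (x - xs) - (F' (xs + σ • (x - xs))) (x - xs)‖ :=
          mul_le_mul_of_nonneg_left
            (intervalIntegral.norm_integral_le_integral_norm zero_le_one) (norm_nonneg Ginv)
      _ = ∫ σ in (0:ℝ)..1,
            ‖Ginv‖ * ‖(F' x) (x - xs) - (F' (xs + σ • (x - xs))) (x - xs)‖ := by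
          rw [intervalIntegral.integral_const_mul]
      _ ≤ ∫ σ in (0:ℝ)..1, (f' s - f' (σ * s)) * s :=
          intervalIntegral.integral_mono_on zero_le_one hWnint hfsint hptw
      _ = s * f' s - f s := hintval
  -- main inequality
  have hmain : -(f' s) * ‖z‖ ^ 2 ≤ (s * f' s - f s) * ‖z‖ := by
    have h1 : ‖Ginv‖ * ⟪(F' x) z, z⟫ ≤ ‖Ginv‖ * (‖W‖ * ‖z‖) := by
      apply mul_le_mul_of_nonneg_left _ (norm_nonneg Ginv)
      exact le_trans hkey (real_inner_le_norm W z)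
    have h2 : ‖Ginv‖ * (‖W‖ * ‖z‖) ≤ (s * f' s - f s) * ‖z‖ := by
      have := mul_le_mul_of_nonneg_right hWnorm (norm_nonneg z)
      nlinarith [this]
    linarith [hlow]
  have hzle : ‖z‖ ≤ (s * f' s - f s) / (-(f' s)) := by
    have hfs' : 0 < -(f' s) := by linarith
    rcases eq_or_lt_of_le (norm_nonneg z) with h0 | h0
    · rw [← h0]
      exact div_nonneg hgs0 hfs'.le
    · rw [le_div_iff₀ hfs']
      have e : ‖z‖ * -(f' s) * ‖z‖ = -(f' s) * ‖z‖ ^ 2 := by ring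
      exact le_of_mul_le_mul_right (by rw [e]; exact hmain) h0
  -- identify |t - f t / f' t|
  have habs : |t - f t / f' t| = (t * f' t - f t) / (-(f' t)) := by
    have hne : f' t ≠ 0 := ne_of_lt hft
    have e : t - f t / f' t = (t * f' t - f t) / f' t := by
      field_simp
    have e2 : (t * f' t - f t) / f' t = -((t * f' t - f t) / (-(f' t))) := by
      rw [div_neg, neg_neg]
    rw [e, e2, abs_neg, abs_of_nonneg (div_nonneg hgt0 (by linarith))]
  -- final bounds
  have hb1 : (s * f' s - f s) / (-(f' s)) ≤ |t - f t / f' t| / t ^ 2 * s ^ 2 := by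
    have hfs' : 0 < -(f' s) := by linarith
    have hft' : 0 < -(f' t) := by linarith
    have hgst : s * f' s - f s ≤ (t * f' t - f t) / t ^ 2 * s ^ 2 := by
      rcases eq_or_lt_of_le hs0 with h0 | h0
      · rw [← h0]
        simp [hf0]
      · have := hg2 s t h0 hxt htR
        rw [div_le_div_iff₀ (by positivity) (by positivity)] at this
        rw [div_mul_eq_mul_div, le_div_iff₀ (by positivity : (0:ℝ) < t ^ 2)]
        nlinarith [this]
    have hmono : -(f' t) ≤ -(f' s) := by
      have : f' s ≤ f' t := hfmono.monotoneOn ⟨hs0, hsR⟩ ⟨htpos.le, htR⟩ hxt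
      linarith
    calc (s * f' s - f s) / (-(f' s)) ≤ (s * f' s - f s) / (-(f' t)) :=
          div_le_div_of_nonneg_left hgs0 hft' hmono
      _ ≤ ((t * f' t - f t) / t ^ 2 * s ^ 2) / (-(f' t)) := by
          apply div_le_div_of_nonneg_right hgst hft'.le
      _ = |t - f t / f' t| / t ^ 2 * s ^ 2 := by
          rw [habs]
          field_simp
  have goal1 : ‖z‖ ≤ |t - f t / f' t| / t ^ 2 * s ^ 2 := le_trans hzle hb1
  have goal2 : |t - f t / f' t| / t ^ 2 * s ^ 2 ≤ |t - f t / f' t| := by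
    have hs2 : s ^ 2 ≤ t ^ 2 := by nlinarith
    calc |t - f t / f' t| / t ^ 2 * s ^ 2 ≤ |t - f t / f' t| / t ^ 2 * t ^ 2 :=
          mul_le_mul_of_nonneg_left hs2 (by positivity)
      _ = |t - f t / f' t| := by
          field_simp
  have goal3 : ‖z‖ < r := by
    have hft' : 0 < -(f' t) := by linarith
    have habslt : |t - f t / f' t| < t := by
      rw [habs, div_lt_iff₀ hft']
      nlinarith [hgt_lt]
    calc ‖z‖ ≤ |t - f t / f' t| / t ^ 2 * s ^ 2 := goal1
      _ ≤ |t - f t / f' t| := goal2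
      _ < t := habslt
      _ < r := htr
  exact ⟨goal1, goal2, goal3⟩
end

section
/- Let H be a real Hilbert space, Ω ⊆ H open, F : Ω → H continuously Fréchet differentiable, T : H ⇉ H a maximal monotone set-valued operator, and x* ∈ Ω with 0 ∈ F(x*) + T(x*). Suppose F'(x*) is a positive-semidefinite bounded linear operator (⟨F'(x*)y, y⟩ ≥ 0 for all y) and F̂'(x*) := (F'(x*) + F'(x*)*)/2 has a bounded linear inverse, and f : [0, R) → ℝ (R > 0) is twice continuously differentiable with f(0) = 0, f'(0) = −1, f' convex and strictly increasing, satisfying ‖F̂'(x*)⁻¹‖ · ‖F'(x) − F'(x* + τ(x − x*))‖ ≤ f'(‖x − x*‖) − f'(τ‖x − x*‖) for all τ ∈ [0, 1], x ∈ B(x*, κ), where κ := sup{t ∈ [0, R) : B(x*, t) ⊂ Ω}. Let ν := sup{t ∈ [0, R) : f'(t) < 0}, ρ := sup{t ∈ (0, ν) : f(t)/(t f'(t)) − 1 < 1}, r := min{κ, ρ}. If t ∈ (0, r) and f(t) < 0, then x* is the unique point y ∈ B[x*, t] satisfying 0 ∈ F(y) + T(y). -/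
open RealInnerProductSpace Filter Metric Set

private lemma psd_cauchy_schwarz {H : Type*} [NormedAddCommGroup H] [InnerProductSpace ℝ H]
    (B : H →L[ℝ] H) (hpsd : ∀ w : H, 0 ≤ ⟪B w, w⟫) (hsym : ∀ x y : H, ⟪B x, y⟫ = ⟪x, B y⟫)
    (x y : H) : ⟪B x, y⟫ ^ 2 ≤ ⟪B x, x⟫ * ⟪B y, y⟫ := by
  have key : ∀ l : ℝ, 0 ≤ ⟪B y, y⟫ * (l * l) + (2 * ⟪B x, y⟫) * l + ⟪B x, x⟫ := by
    intro l
    have h := hpsd (x + l • y)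
    have hyx : ⟪B y, x⟫ = ⟪B x, y⟫ := by rw [hsym y x, real_inner_comm]
    simp only [map_add, map_smul, inner_add_left, inner_add_right, real_inner_smul_left,
      real_inner_smul_right, hyx] at h
    nlinarith [h]
  have hd := discrim_le_zero key
  rw [discrim] at hd
  nlinarith [hd]

set_option maxHeartbeats 2000000 in
theorem uniqueness_of_solution_in_closed_ball {H : Type*} [NormedAddCommGroup H] [InnerProductSpace ℝ H] [CompleteSpace H]
    (Ω : Set H) (hΩ : IsOpen Ω) (F : H → H) (F' : H → H →L[ℝ] H)
    (hFd : ∀ x ∈ Ω, HasFDerivAt F (F' x) x) (hF'c : ContinuousOn F' Ω)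
    (xs : H) (hxs : xs ∈ Ω)
    (T : H → Set H) (hT : IsMaximalMonotone T)
    (hsol : (0 : H) ∈ (fun w => F xs + w) '' T xs)
    (hpsd : ∀ y : H, 0 ≤ ⟪(F' xs) y, y⟫)
    (Ahat : H →L[ℝ] H)
    (hAhat : Ahat = (1 / 2 : ℝ) • (F' xs + ContinuousLinearMap.adjoint (F' xs)))
    (Ginv : H →L[ℝ] H)
    (hGinv1 : Ginv.comp Ahat = ContinuousLinearMap.id ℝ H)
    (hGinv2 : Ahat.comp Ginv = ContinuousLinearMap.id ℝ H)
    (R : ℝ) (hR : 0 < R) (κ : ℝ)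
    (hκ : κ = sSup {u : ℝ | u ∈ Set.Ico (0 : ℝ) R ∧ Metric.ball xs u ⊆ Ω})
    (f f' f'' : ℝ → ℝ)
    (hfd1 : ∀ t ∈ Set.Ico (0 : ℝ) R, HasDerivWithinAt f (f' t) (Set.Ico (0 : ℝ) R) t)
    (hfd2 : ∀ t ∈ Set.Ico (0 : ℝ) R, HasDerivWithinAt f' (f'' t) (Set.Ico (0 : ℝ) R) t)
    (hfc : ContinuousOn f'' (Set.Ico (0 : ℝ) R))
    (hf0 : f 0 = 0) (hf'0 : f' 0 = -1)
    (hfconv : ConvexOn ℝ (Set.Ico (0 : ℝ) R) f')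
    (hfmono : StrictMonoOn f' (Set.Ico (0 : ℝ) R))
    (hmaj : ∀ τ ∈ Set.Icc (0 : ℝ) 1, ∀ x ∈ Metric.ball xs κ,
      ‖Ginv‖ * ‖F' x - F' (xs + τ • (x - xs))‖ ≤ f' ‖x - xs‖ - f' (τ * ‖x - xs‖))
    (ν : ℝ) (hν : ν = sSup {u : ℝ | u ∈ Set.Ico (0 : ℝ) R ∧ f' u < 0})
    (ρ : ℝ) (hρ : ρ = sSup {u : ℝ | u ∈ Set.Ioo (0 : ℝ) ν ∧ f u / (u * f' u) - 1 < 1})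
    (r : ℝ) (hr : r = min κ ρ)
    (t : ℝ) (htpos : 0 < t) (htr : t < r) (hft : f t < 0) :
    ∀ y ∈ Metric.closedBall xs t, ((0 : H) ∈ (fun w => F y + w) '' T y ↔ y = xs) := by
  -- basic facts about the suprema
  have hκball : Metric.ball xs κ ⊆ Ω := by
    intro z hz
    rw [Metric.mem_ball] at hz
    have hne : ({u : ℝ | u ∈ Set.Ico (0:ℝ) R ∧ Metric.ball xs u ⊆ Ω}).Nonempty :=
      ⟨0, ⟨le_refl 0, hR⟩, by rw [Metric.ball_eq_empty.mpr le_rfl]; exact empty_subset _⟩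
    obtain ⟨u, ⟨hu1, hu2⟩, hzu⟩ := exists_lt_of_lt_csSup hne (hκ ▸ hz)
    exact hu2 (Metric.mem_ball.mpr hzu)
  have htκ : t < κ := lt_of_lt_of_le htr (hr ▸ min_le_left _ _)
  have htρ : t < ρ := lt_of_lt_of_le htr (hr ▸ min_le_right _ _)
  have hρν : ρ ≤ ν := by
    by_cases hSρ : ({u : ℝ | u ∈ Set.Ioo (0:ℝ) ν ∧ f u / (u * f' u) - 1 < 1}).Nonempty
    · exact hρ ▸ csSup_le hSρ (fun u hu => hu.1.2.le)
    · exfalso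
      rw [Set.not_nonempty_iff_eq_empty] at hSρ
      rw [hSρ, Real.sSup_empty] at hρ
      linarith
  have htν : t < ν := lt_of_lt_of_le htρ hρν
  have hνne : ({u : ℝ | u ∈ Set.Ico (0:ℝ) R ∧ f' u < 0}).Nonempty :=
    ⟨0, ⟨le_refl 0, hR⟩, by rw [hf'0]; norm_num⟩
  have hνR : ν ≤ R := hν ▸ csSup_le hνne (fun u hu => hu.1.2.le)
  have hf'neg : ∀ u : ℝ, 0 ≤ u → u < ν → f' u < 0 := by
    intro u hu0 huν
    obtain ⟨w, hw, huw⟩ := exists_lt_of_lt_csSup hνne (hν ▸ huν)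
    exact lt_trans (hfmono ⟨hu0, lt_trans huw hw.1.2⟩ hw.1 huw) hw.2
  have htR : t < R := htν.trans_le hνR
  -- continuity and differentiability of f
  have hfcont : ContinuousOn f (Set.Ico 0 R) := fun x hx => (hfd1 x hx).continuousWithinAt
  have hfderivAt : ∀ x ∈ Set.Ioo (0:ℝ) R, HasDerivAt f (f' x) x := fun x hx =>
    (hfd1 x ⟨hx.1.le, hx.2⟩).hasDerivAt (Ico_mem_nhds hx.1 hx.2)
  intro y hy
  constructor
  swap
  · rintro rfl; exact hsol
  intro h0y
  obtain ⟨u, hu, huq⟩ := hsol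
  obtain ⟨v, hv, hvq⟩ := h0y
  by_contra hne
  set d := y - xs with hd
  have hd0 : d ≠ 0 := sub_ne_zero.mpr hne
  set s := ‖d‖ with hs
  have hs0 : 0 < s := norm_pos_iff.mpr hd0
  have hst : s ≤ t := by rw [Metric.mem_closedBall, dist_eq_norm] at hy; exact hy
  have hc0 : 0 < ‖Ginv‖ := by
    rw [norm_pos_iff]
    intro hG
    apply hd0
    have hGA : Ginv (Ahat d) = d := by
      rw [← ContinuousLinearMap.comp_apply, hGinv1]; rfl
    rw [hG] at hGA
    simpa using hGA.symm
  -- properties of Ahat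
  have hsym : ∀ w z : H, ⟪Ahat w, z⟫ = ⟪w, Ahat z⟫ := by
    intro w z
    rw [hAhat]
    simp only [ContinuousLinearMap.smul_apply, ContinuousLinearMap.add_apply,
      real_inner_smul_left, real_inner_smul_right, inner_add_left, inner_add_right,
      ContinuousLinearMap.adjoint_inner_left, ContinuousLinearMap.adjoint_inner_right]
    ring
  have hAq : ∀ w : H, ⟪Ahat w, w⟫ = ⟪(F' xs) w, w⟫ := by
    intro w
    rw [hAhat]
    have hadj : ⟪(ContinuousLinearMap.adjoint (F' xs)) w, w⟫ = ⟪(F' xs) w, w⟫ := by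
      rw [ContinuousLinearMap.adjoint_inner_left, real_inner_comm]
    simp only [ContinuousLinearMap.smul_apply, ContinuousLinearMap.add_apply,
      real_inner_smul_left, inner_add_left, hadj]
    ring
  have hApsd : ∀ w : H, 0 ≤ ⟪Ahat w, w⟫ := fun w => (hAq w) ▸ hpsd w
  -- coercivity of the quadratic form of Ahat
  have hAd : Ahat (Ginv d) = d := by
    rw [← ContinuousLinearMap.comp_apply, hGinv2]; rfl
  have hCS := psd_cauchy_schwarz Ahat hApsd hsym (Ginv d) d
  rw [hAd] at hCS
  have hdd : ⟪d, d⟫ = s ^ 2 := real_inner_self_eq_norm_sq d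
  have hM : ⟪d, Ginv d⟫ ≤ ‖Ginv‖ * (s * s) := by
    calc ⟪d, Ginv d⟫ ≤ ‖d‖ * ‖Ginv d‖ := real_inner_le_norm d (Ginv d)
    _ ≤ ‖d‖ * (‖Ginv‖ * ‖d‖) :=
        mul_le_mul_of_nonneg_left (Ginv.le_opNorm d) (norm_nonneg d)
    _ = ‖Ginv‖ * (s * s) := by rw [← hs]; ring
  have hquad : (s * s) / ‖Ginv‖ ≤ ⟪Ahat d, d⟫ := by
    rw [div_le_iff₀ hc0]
    rw [hdd] at hCS
    have h4 : (s*s) * (s*s) ≤ (‖Ginv‖ * (s*s)) * ⟪Ahat d, d⟫ := by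
      calc (s*s) * (s*s) = (s^2)^2 := by ring
      _ ≤ ⟪d, Ginv d⟫ * ⟪Ahat d, d⟫ := hCS
      _ ≤ (‖Ginv‖ * (s*s)) * ⟪Ahat d, d⟫ := mul_le_mul_of_nonneg_right hM (hApsd d)
    nlinarith [mul_pos hs0 hs0]
  -- f s < 0
  have hfs : f s < 0 := by
    have hanti : StrictAntiOn f (Set.Icc 0 s) := by
      apply strictAntiOn_of_deriv_neg (convex_Icc 0 s)
      · exact hfcont.mono (fun x hx => ⟨hx.1, lt_of_le_of_lt (hx.2.trans hst) htR⟩)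
      · intro x hx
        rw [interior_Icc] at hx
        have hxR : x ∈ Set.Ioo (0:ℝ) R := ⟨hx.1, lt_of_lt_of_le (hx.2.trans_le hst) htR.le⟩
        rw [(hfderivAt x hxR).deriv]
        exact hf'neg x hx.1.le (lt_of_lt_of_le (hx.2.trans_le hst) htν.le)
    have h := hanti (left_mem_Icc.mpr hs0.le) (right_mem_Icc.mpr hs0.le) hs0
    rwa [hf0] at h
  -- the auxiliary scalar function
  set g : ℝ → ℝ := fun τ => ⟪F (xs + τ • d), d⟫ + (s / ‖Ginv‖) * f (τ * s) with hg
  have hnormz : ∀ τ : ℝ, 0 ≤ τ → ‖xs + τ • d - xs‖ = τ * s := by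
    intro τ h0
    rw [add_sub_cancel_left, norm_smul, Real.norm_eq_abs, abs_of_nonneg h0, ← hs]
  have hzball : ∀ τ : ℝ, 0 ≤ τ → τ ≤ 1 → xs + τ • d ∈ Metric.ball xs κ := by
    intro τ h0 h1
    rw [Metric.mem_ball, dist_eq_norm, hnormz τ h0]
    calc τ * s ≤ 1 * s := mul_le_mul_of_nonneg_right h1 hs0.le
    _ = s := one_mul s
    _ ≤ t := hst
    _ < κ := htκ
  have hinnerD : ∀ τ : ℝ, 0 ≤ τ → τ ≤ 1 →
      HasDerivAt (fun τ : ℝ => ⟪F (xs + τ • d), d⟫) ⟪(F' (xs + τ • d)) d, d⟫ τ := by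
    intro τ h0 h1
    have hline : HasDerivAt (fun τ : ℝ => xs + τ • d) d τ := by
      simpa using ((hasDerivAt_id τ).smul_const d).const_add xs
    have hzin : xs + τ • d ∈ Ω := hκball (hzball τ h0 h1)
    have hF : HasDerivAt (fun τ : ℝ => F (xs + τ • d)) ((F' (xs + τ • d)) d) τ :=
      (hFd _ hzin).comp_hasDerivAt τ hline
    simpa using hF.inner ℝ (hasDerivAt_const τ d)
  have hgd : ∀ τ ∈ Set.Ioo (0:ℝ) 1,
      HasDerivAt g (⟪(F' (xs + τ • d)) d, d⟫ + (s / ‖Ginv‖) * (f' (τ * s) * s)) τ := by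
    intro τ hτ
    have hmul : HasDerivAt (fun τ : ℝ => τ * s) s τ := by
      simpa using (hasDerivAt_id τ).mul_const s
    have hτs : τ * s ∈ Set.Ioo (0:ℝ) R := by
      constructor
      · exact mul_pos hτ.1 hs0
      · have : τ * s ≤ s := by nlinarith [hτ.2.le, hs0.le]
        exact lt_of_le_of_lt (this.trans hst) htR
    have hcomp : HasDerivAt (fun τ : ℝ => f (τ * s)) (f' (τ * s) * s) τ :=
      (hfderivAt _ hτs).comp τ hmul
    exact (hinnerD τ hτ.1.le hτ.2.le).add (hcomp.const_mul (s / ‖Ginv‖))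
  have hgc : ContinuousOn g (Set.Icc 0 1) := by
    apply ContinuousOn.add
    · intro τ hτ
      exact (hinnerD τ hτ.1 hτ.2).continuousAt.continuousWithinAt
    · apply ContinuousOn.mul continuousOn_const
      have hmapsto : Set.MapsTo (fun τ : ℝ => τ * s) (Set.Icc 0 1) (Set.Ico 0 R) := by
        intro τ hτ
        refine ⟨mul_nonneg hτ.1 hs0.le, ?_⟩
        have : τ * s ≤ s := by nlinarith [hτ.2, hs0.le]
        exact lt_of_le_of_lt (this.trans hst) htR
      exact hfcont.comp (Continuous.continuousOn (by fun_prop)) hmapsto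
  have hge : ∀ τ ∈ interior (Set.Icc (0:ℝ) 1), 0 ≤ deriv g τ := by
    rw [interior_Icc]
    intro τ hτ
    rw [(hgd τ hτ).deriv]
    have hzb : xs + τ • d ∈ Metric.ball xs κ := hzball τ hτ.1.le hτ.2.le
    have hmaj' := hmaj 0 ⟨le_refl 0, zero_le_one⟩ (xs + τ • d) hzb
    rw [hnormz τ hτ.1.le] at hmaj'
    simp only [zero_smul, add_zero, zero_mul, hf'0] at hmaj'
    -- hmaj' : ‖Ginv‖ * ‖F' (xs + τ • d) - F' (xs + 0 • (xs + τ • d - xs))‖ ≤ f' (τ*s) - -1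
    have hmaj'' : ‖Ginv‖ * ‖F' (xs + τ • d) - F' xs‖ ≤ f' (τ * s) + 1 := by
      linarith [hmaj']
    have hda : ⟪(F' (xs + τ • d)) d, d⟫ =
        ⟪(F' xs) d, d⟫ + ⟪(F' (xs + τ • d) - F' xs) d, d⟫ := by
      rw [ContinuousLinearMap.sub_apply, inner_sub_left]; ring
    have hEb : |⟪(F' (xs + τ • d) - F' xs) d, d⟫| ≤ ‖F' (xs + τ • d) - F' xs‖ * (s * s) := by
      calc |⟪(F' (xs + τ • d) - F' xs) d, d⟫| ≤ ‖(F' (xs + τ • d) - F' xs) d‖ * ‖d‖ :=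
            abs_real_inner_le_norm _ _
      _ ≤ (‖F' (xs + τ • d) - F' xs‖ * ‖d‖) * ‖d‖ :=
            mul_le_mul_of_nonneg_right ((F' (xs + τ • d) - F' xs).le_opNorm d) (norm_nonneg d)
      _ = ‖F' (xs + τ • d) - F' xs‖ * (s * s) := by rw [← hs]; ring
    rw [hda, ← hAq d]
    have hXlow : -(‖F' (xs + τ • d) - F' xs‖ * (s * s)) ≤ ⟪(F' (xs + τ • d) - F' xs) d, d⟫ :=
      (abs_le.mp hEb).1
    have hE2 : ‖F' (xs + τ • d) - F' xs‖ * (s * s) ≤ ((f' (τ * s) + 1) * (s * s)) / ‖Ginv‖ := by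
      rw [le_div_iff₀ hc0]
      nlinarith [hmaj'', mul_nonneg hs0.le hs0.le]
    have hexp : (s / ‖Ginv‖) * (f' (τ * s) * s) = (f' (τ * s) * (s * s)) / ‖Ginv‖ := by ring
    have hzero : (s * s) / ‖Ginv‖ - ((f' (τ * s) + 1) * (s * s)) / ‖Ginv‖
        + (f' (τ * s) * (s * s)) / ‖Ginv‖ = 0 := by ring
    rw [hexp]
    linarith [hquad, hXlow, hE2, hzero]
  have hmo := monotoneOn_of_deriv_nonneg (convex_Icc 0 1) hgc
    (fun τ hτ => by
      rw [interior_Icc] at hτ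
      exact (hgd τ hτ).differentiableAt.differentiableWithinAt) hge
  have h01 : g 0 ≤ g 1 :=
    hmo (by constructor <;> norm_num) (by constructor <;> norm_num) zero_le_one
  have hg0 : g 0 = ⟪F xs, d⟫ := by
    simp only [hg, zero_smul, add_zero, zero_mul, hf0, mul_zero]
  have hg1 : g 1 = ⟪F y, d⟫ + (s / ‖Ginv‖) * f s := by
    simp only [hg, one_smul, one_mul]
    rw [hd, add_sub_cancel]
  rw [hg0, hg1] at h01
  -- monotonicity of T
  have hmT := hT.1 xs y v u hv hu
  have hu' : u = -F xs := eq_neg_of_add_eq_zero_right huq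
  have hv' : v = -F y := eq_neg_of_add_eq_zero_right hvq
  rw [hu', hv', ← hd] at hmT
  have hmT' : 0 ≤ ⟪F xs, d⟫ - ⟪F y, d⟫ := by
    have he : -F y - -F xs = F xs - F y := by abel
    rw [he, inner_sub_left] at hmT
    exact hmT
  have hneg : (s / ‖Ginv‖) * f s < 0 := mul_neg_of_pos_of_neg (div_pos hs0 hc0) hfs
  linarith
end

section
/- Let H be a real Hilbert space, Ω ⊆ H open, F : Ω → H continuously Fréchet differentiable, T : H ⇉ H a maximal monotone set-valued operator, and x* ∈ Ω with 0 ∈ F(x*) + T(x*). Suppose F'(x*) is a positive-semidefinite bounded linear operator and F̂'(x*) := (F'(x*) + F'(x*)*)/2 has a bounded linear inverse. Let R > 0, κ := sup{t ∈ [0, R) : B(x*, t) ⊂ Ω}, and let f : [0, R) → ℝ be twice continuously differentiable with f(0) = 0, f'(0) = −1, f' convex and strictly increasing, satisfying ‖F̂'(x*)⁻¹‖ · ‖F'(x) − F'(x* + τ(x − x*))‖ ≤ f'(‖x − x*‖) − f'(τ‖x − x*‖) for all τ ∈ [0, 1], x ∈ B(x*, κ). Set ν := sup{t ∈ [0, R)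 : f'(t) < 0}, ρ := sup{t ∈ (0, ν) : f(t)/(t f'(t)) − 1 < 1}, r := min{κ, ρ}. Then for any sequence {x_k} with x₀ ∈ B(x*, r) \ {x*} satisfying the Newton inclusion 0 ∈ F(x_k) + F'(x_k)(x_{k+1} − x_k) + T(x_{k+1}) for all k ≥ 0, the whole sequence {x_k} is contained in B(x*, r) and converges to x*. -/
open RealInnerProductSpace Filter Metric Set

open Topology

/-!
For `e = x_{k+1} - x*`, monotonicity of `T` at `x*` and `x_{k+1}` turns the Newton inclusion into
`⟪F'(x*) e, e⟫ ≤ ‖F'(x_k) - F'(x*)‖ ‖e‖² + ‖F(x_k) - F(x*) - F'(x_k)(x_k - x*)‖ ‖e‖`, while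
positivity and invertibility of `F̂'(x*)` give `‖e‖² ≤ ‖F̂'(x*)⁻¹‖ ⟪F'(x*) e, e⟫`. The majorant
condition bounds both terms on the right by the scalar function `f`, through a mean value
inequality along the segment `[x*, x_k]`, which yields `‖e‖ |f'(t)| ≤ t f'(t) - f(t)` for
`t = ‖x_k - x*‖`. Convexity of `f'` makes `(t f'(t) - f(t)) / (t |f'(t)|)` nondecreasing, and it is
below `1` under `ρ`; so from any radius `δ` between `‖x_0 - x*‖` and `r` the error contracts
linearly with the rate attained at `δ`.
-/

lemma exists_mem_gt_of_lt_sSup {S : Set ℝ} {x : ℝ} (hx : 0 ≤ x) (h : x < sSup S) :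
    ∃ s ∈ S, x < s := by
  refine exists_lt_of_lt_csSup (Set.nonempty_iff_ne_empty.2 fun hS => ?_) h
  rw [hS, Real.sSup_empty] at h
  linarith

lemma zero_mem_image_add_iff {G : Type*} [AddGroup G] (a : G) (S : Set G) :
    (0 : G) ∈ (fun w => a + w) '' S ↔ -a ∈ S := by
  simp [Set.image_add_left]

lemma dist_le_pow_mul_of_contracting {X : Type*} [PseudoMetricSpace X] {x : ℕ → X} {a : X}
    {c δ : ℝ} (hc0 : 0 ≤ c) (hc1 : c ≤ 1) (h0 : dist (x 0) a ≤ δ)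
    (hstep : ∀ k, dist (x k) a ≤ δ → dist (x (k + 1)) a ≤ c * dist (x k) a) (k : ℕ) :
    dist (x k) a ≤ c ^ k * δ := by
  induction k with
  | zero => simpa using h0
  | succ k ih =>
    have hδ : dist (x k) a ≤ δ :=
      ih.trans (mul_le_of_le_one_left (dist_nonneg.trans h0) (pow_le_one₀ hc0 hc1))
    calc dist (x (k + 1)) a ≤ c * dist (x k) a := hstep k hδ
      _ ≤ c * (c ^ k * δ) := by gcongr
      _ = c ^ (k + 1) * δ := by ring

lemma tendsto_of_dist_le_pow_mul {X : Type*} [PseudoMetricSpace X] {x : ℕ → X} {a : X}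
    {c δ : ℝ} (hc0 : 0 ≤ c) (hc1 : c < 1) (h : ∀ k, dist (x k) a ≤ c ^ k * δ) :
    Tendsto x atTop (𝓝 a) :=
  tendsto_iff_dist_tendsto_zero.2 <| squeeze_zero (fun _ => dist_nonneg) h <| by
    simpa using (tendsto_pow_atTop_nhds_zero_of_lt_one hc0 hc1).mul_const δ

lemma ball_sSup_subset {X : Type*} [PseudoMetricSpace X] (Ω : Set X) (x : X) (R : ℝ) :
    ball x (sSup {u | u ∈ Ico 0 R ∧ ball x u ⊆ Ω}) ⊆ Ω := fun y hy => by
  obtain ⟨u, hu, hyu⟩ := exists_mem_gt_of_lt_sSup dist_nonneg (mem_ball.1 hy)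
  exact hu.2 (mem_ball.2 hyu)

lemma le_of_hasDerivWithinAt_Icc_nonneg {g g' : ℝ → ℝ} {a b : ℝ} (hab : a ≤ b)
    (hg : ∀ τ ∈ Icc a b, HasDerivWithinAt g (g' τ) (Icc a b) τ)
    (hg' : ∀ τ ∈ Icc a b, 0 ≤ g' τ) : g a ≤ g b :=
  monotoneOn_of_hasDerivWithinAt_nonneg (convex_Icc a b)
    (fun τ hτ => (hg τ hτ).continuousWithinAt)
    (fun τ hτ => (hg τ (interior_subset hτ)).mono interior_subset)
    (fun τ hτ => hg' τ (interior_subset hτ)) (left_mem_Icc.2 hab) (right_mem_Icc.2 hab) hab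

lemma norm_sub_sub_le_of_majorant {E F : Type*} [NormedAddCommGroup E] [NormedSpace ℝ E]
    [NormedAddCommGroup F] [NormedSpace ℝ F] {φ : E → F} {φ' : E → E →L[ℝ] F}
    {L : E →L[ℝ] F} {a u : E} {C : ℝ} {g g' : ℝ → ℝ} (hC : 0 ≤ C)
    (hφ : ∀ τ ∈ Icc (0 : ℝ) 1, HasFDerivAt φ (φ' (a + τ • u)) (a + τ • u))
    (hg : ∀ τ ∈ Icc (0 : ℝ) 1, HasDerivWithinAt g (g' τ) (Icc 0 1) τ)
    (hbound : ∀ τ ∈ Icc (0 : ℝ) 1, C * (‖φ' (a + τ • u) - L‖ * ‖u‖) ≤ g' τ) :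
    C * ‖φ (a + u) - φ a - L u‖ ≤ g 1 - g 0 := by
  set ψ : ℝ → F := fun τ => C • (φ (a + τ • u) - φ a - τ • L u)
  have hψ : ∀ τ ∈ Icc (0 : ℝ) 1, HasDerivAt ψ (C • (φ' (a + τ • u) u - L u)) τ := by
    intro τ hτ
    have hγ : HasDerivAt (fun τ : ℝ => a + τ • u) u τ := by
      simpa using ((hasDerivAt_id τ).smul_const u).const_add a
    have := ((((hφ τ hτ).comp_hasDerivAt τ hγ).sub_const (φ a)).sub
      ((hasDerivAt_id τ).smul_const (L u))).const_smul C
    rwa [one_smul] at this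
  have key := image_norm_le_of_norm_deriv_right_le_deriv_boundary' (B := fun τ => g τ - g 0)
    (fun τ hτ => (hψ τ hτ).continuousAt.continuousWithinAt)
    (fun τ hτ => (hψ τ (Ico_subset_Icc_self hτ)).hasDerivWithinAt) (by simp [ψ])
    (fun τ hτ => ((hg τ hτ).sub_const (g 0)).continuousWithinAt)
    (fun τ hτ => ((hg τ (Ico_subset_Icc_self hτ)).sub_const (g 0)).mono_of_mem_nhdsWithin
      (Icc_mem_nhdsGE_of_mem hτ))
    (fun τ hτ => ?_) (right_mem_Icc.2 zero_le_one)
  · simpa [ψ, norm_smul, abs_of_nonneg hC] using key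
  · calc ‖C • (φ' (a + τ • u) u - L u)‖ = C * ‖(φ' (a + τ • u) - L) u‖ := by
          rw [norm_smul, Real.norm_of_nonneg hC, sub_apply]
      _ ≤ C * (‖φ' (a + τ • u) - L‖ * ‖u‖) := by gcongr; exact ContinuousLinearMap.le_opNorm _ _
      _ ≤ g' τ := hbound τ (Ico_subset_Icc_self hτ)

lemma ConvexOn.sub_comp_mul_le_sub_comp_mul {R : ℝ} {g : ℝ → ℝ} (hg : ConvexOn ℝ (Ico 0 R) g)
    (hgm : MonotoneOn g (Ico 0 R)) {s t τ : ℝ} (hs : 0 ≤ s) (hst : s ≤ t) (htR : t < R)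
    (hτ : τ ∈ Icc (0 : ℝ) 1) : g s - g (τ * s) ≤ g t - g (τ * t) := by
  have mem : ∀ u, 0 ≤ u → u ≤ t → u ∈ Ico 0 R := fun u hu hut => ⟨hu, hut.trans_lt htR⟩
  have hτt : τ * t ≤ t := mul_le_of_le_one_left (hs.trans hst) hτ.2
  have hB : 0 ≤ g t - g (τ * t) :=
    sub_nonneg.2 <|
      hgm (mem _ (mul_nonneg hτ.1 (hs.trans hst)) hτt) (mem t (hs.trans hst) le_rfl) hτt
  rcases hs.eq_or_lt with rfl | hs
  · simpa using hB
  rcases hτ.2.eq_or_lt with rfl | hτ1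
  · simp
  have hτs : τ * s < s := mul_lt_of_lt_one_left hs hτ1
  have hτt' : τ * t < t := mul_lt_of_lt_one_left (hs.trans_le hst) hτ1
  have hτst : τ * s ≤ τ * t := mul_le_mul_of_nonneg_left hst hτ.1
  have hmτs := mem _ (mul_nonneg hτ.1 hs.le) (hτst.trans hτt)
  -- slope over `[τ s, s]` ≤ slope over `[τ s, t]` ≤ slope over `[τ t, t]`
  have h1 := hg.secant_mono hmτs (mem s hs.le hst) (mem t (hs.le.trans hst) le_rfl)
    hτs.ne' (hτs.trans_le hst).ne' hst
  have h2 := hg.secant_mono (mem t (hs.le.trans hst) le_rfl) hmτs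
    (mem _ (mul_nonneg hτ.1 (hs.le.trans hst)) hτt'.le) (hτs.trans_le hst).ne hτt'.ne hτst
  rw [← neg_sub (g t), ← neg_sub t, ← neg_sub (g t) (g (τ * t)), ← neg_sub t (τ * t),
    neg_div_neg_eq, neg_div_neg_eq] at h2
  rw [div_le_div_iff₀ (by linarith) (by linarith)] at h1 h2
  have hpos : 0 < (t - τ * s) * t := by nlinarith
  refine le_of_mul_le_mul_right ?_ hpos
  nlinarith [mul_le_mul_of_nonneg_right h1 (hs.le.trans hst), mul_le_mul_of_nonneg_right h2 hs.le,
    mul_nonneg hB (mul_nonneg (sub_nonneg.2 hst) (by linarith : (0:ℝ) ≤ t - τ * s))]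

section InnerProduct

variable {H : Type*} [NormedAddCommGroup H] [InnerProductSpace ℝ H]

lemma inner_newton_error_le {T : H → Set H}
    (hT : ∀ x y u v : H, u ∈ T y → v ∈ T x → 0 ≤ ⟪u - v, y - x⟫)
    {F : H → H} {A L : H →L[ℝ] H} {xs x y : H} (hxs : -F xs ∈ T xs)
    (hy : -(F x + L (y - x)) ∈ T y) :
    ⟪A (y - xs), y - xs⟫ ≤
      ‖L - A‖ * ‖y - xs‖ ^ 2 + ‖F x - F xs - L (x - xs)‖ * ‖y - xs‖ := by
  set e := y - xs
  have hmon := hT xs y _ _ hy hxs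
  have hsplit : ⟪A e, e⟫ = ⟪(A - L) e, e⟫ - ⟪F x - F xs - L (x - xs), e⟫
      - ⟪-(F x + L (y - x)) - -F xs, e⟫ := by
    rw [← inner_sub_left, ← inner_sub_left]
    congr 1
    simp only [sub_apply, map_sub, e]
    abel
  have hlin : ⟪(A - L) e, e⟫ ≤ ‖L - A‖ * ‖e‖ ^ 2 := by
    calc ⟪(A - L) e, e⟫ ≤ ‖(A - L) e‖ * ‖e‖ := real_inner_le_norm _ _
      _ ≤ ‖A - L‖ * ‖e‖ * ‖e‖ := by gcongr; exact ContinuousLinearMap.le_opNorm _ _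
      _ = ‖L - A‖ * ‖e‖ ^ 2 := by rw [norm_sub_rev]; ring
  have hrem := neg_le_of_abs_le (abs_real_inner_le_norm (F x - F xs - L (x - xs)) e)
  linarith

variable [CompleteSpace H]

lemma sq_norm_le_mul_inner {A G : H →L[ℝ] H} (hA : ∀ y, 0 ≤ ⟪A y, y⟫)
    (hG : ((1 / 2 : ℝ) • (A + ContinuousLinearMap.adjoint A)).comp G = .id ℝ H) (z : H) :
    ‖z‖ ^ 2 ≤ ‖G‖ * ⟪A z, z⟫ := by
  set S := (1 / 2 : ℝ) • (A + ContinuousLinearMap.adjoint A)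
  have hSA : ∀ u, ⟪S u, u⟫ = ⟪A u, u⟫ := fun u => by
    simp only [S, smul_apply, add_apply,
      real_inner_smul_left, inner_add_left, ContinuousLinearMap.adjoint_inner_left,
      real_inner_comm u (A u)]
    ring
  have hS : (S : H →ₗ[ℝ] H).IsSymmetric :=
    ((IsSelfAdjoint.all (1 / 2 : ℝ)).smul (IsSelfAdjoint.add_star_self A)).isSymmetric
  have hSG : S (G z) = z := by simpa using congr($hG z)
  let B : LinearMap.BilinForm ℝ H := (innerₗ H).comp (S : H →ₗ[ℝ] H)
  have hCS :=
    B.apply_mul_apply_le_of_forall_zero_le (fun u => by simpa [B, hSA] using hA u) (G z) z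
  have h1 : B (G z) z = ‖z‖ ^ 2 := by simp [B, hSG]
  have h2 : B z (G z) = ‖z‖ ^ 2 :=
    (hS z (G z)).trans (by rw [ContinuousLinearMap.coe_coe, hSG, real_inner_self_eq_norm_sq])
  have h3 : B (G z) (G z) ≤ ‖G‖ * ‖z‖ ^ 2 := by
    simp only [B, LinearMap.comp_apply, innerₗ_apply_apply, ContinuousLinearMap.coe_coe, hSG]
    calc ⟪z, G z⟫ ≤ ‖z‖ * ‖G z‖ := real_inner_le_norm _ _
      _ ≤ ‖z‖ * (‖G‖ * ‖z‖) := by gcongr; exact ContinuousLinearMap.le_opNorm _ _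
      _ = ‖G‖ * ‖z‖ ^ 2 := by ring
  have h4 : B z z = ⟪A z, z⟫ := hSA z
  rw [h1, h2, h4] at hCS
  rcases eq_or_ne z 0 with rfl | hz
  · simp
  have hz2 : 0 < ‖z‖ ^ 2 := by positivity
  nlinarith [hA z]

end InnerProduct

/-- `-N(t) / t` for the Newton map `N(t) = t - f t / f' t` of the majorant. -/
noncomputable def majorantRate (f f' : ℝ → ℝ) (t : ℝ) : ℝ := f t / (t * f' t) - 1

section Majorant

variable {R : ℝ} {f f' : ℝ → ℝ}

lemma mul_mem_Ico_of_mem_Icc {t τ : ℝ} (ht : 0 ≤ t) (htR : t < R) (hτ : τ ∈ Icc (0 : ℝ) 1) :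
    τ * t ∈ Ico 0 R :=
  ⟨mul_nonneg hτ.1 ht, (mul_le_of_le_one_left ht hτ.2).trans_lt htR⟩

lemma hasDerivWithinAt_majorant_gap
    (hf : ∀ t ∈ Ico 0 R, HasDerivWithinAt f (f' t) (Ico 0 R) t) {t τ : ℝ} (ht : 0 ≤ t)
    (htR : t < R) (hτ : τ ∈ Icc (0 : ℝ) 1) :
    HasDerivWithinAt (fun τ => τ * (t * f' t) - f (τ * t)) ((f' t - f' (τ * t)) * t)
      (Icc 0 1) τ := by
  have hcomp := (hf _ (mul_mem_Ico_of_mem_Icc ht htR hτ)).comp τ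
    ((hasDerivWithinAt_id τ (Icc 0 1)).mul_const t)
    (fun σ hσ => mul_mem_Ico_of_mem_Icc ht htR hσ)
  exact (((hasDerivWithinAt_id τ (Icc 0 1)).mul_const (t * f' t)).sub hcomp).congr_deriv
    (by ring)

lemma mul_deriv_sub_nonneg (hf : ∀ t ∈ Ico 0 R, HasDerivWithinAt f (f' t) (Ico 0 R) t)
    (hf' : MonotoneOn f' (Ico 0 R)) (hf0 : f 0 = 0) {t : ℝ} (ht : 0 ≤ t) (htR : t < R) :
    0 ≤ t * f' t - f t := by
  have := le_of_hasDerivWithinAt_Icc_nonneg zero_le_one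
    (fun τ hτ => hasDerivWithinAt_majorant_gap hf ht htR hτ) fun τ hτ =>
      mul_nonneg (sub_nonneg.2 (hf' (mul_mem_Ico_of_mem_Icc ht htR hτ) ⟨ht, htR⟩
        (mul_le_of_le_one_left ht hτ.2))) ht
  simpa [hf0] using this

lemma mul_deriv_sub_div_le (hf : ∀ t ∈ Ico 0 R, HasDerivWithinAt f (f' t) (Ico 0 R) t)
    (hconv : ConvexOn ℝ (Ico 0 R) f') (hf' : MonotoneOn f' (Ico 0 R)) (hf0 : f 0 = 0)
    {s t : ℝ} (hs : 0 < s) (hst : s ≤ t) (htR : t < R) :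
    (s * f' s - f s) / s ≤ (t * f' t - f t) / t := by
  -- `(t f' t - f t) / t` is the mean of `f' t - f' (τ t)` over `τ ∈ [0, 1]`, which grows with `t`
  have ht := hs.trans_le hst
  have := le_of_hasDerivWithinAt_Icc_nonneg zero_le_one
    (fun τ hτ => ((hasDerivWithinAt_majorant_gap hf ht.le htR hτ).div_const t).sub
      ((hasDerivWithinAt_majorant_gap hf hs.le (hst.trans_lt htR) hτ).div_const s))
    fun τ hτ => by
      rw [mul_div_cancel_right₀ _ ht.ne', mul_div_cancel_right₀ _ hs.ne', sub_nonneg]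
      exact hconv.sub_comp_mul_le_sub_comp_mul hf' hs.le hst htR hτ
  simpa [hf0] using this

lemma majorantRate_eq {t : ℝ} (ht : 0 < t) (hft : f' t < 0) :
    majorantRate f f' t = (t * f' t - f t) / t / -f' t := by
  have := hft.ne
  unfold majorantRate
  field_simp
  ring

lemma majorantRate_nonneg (hf : ∀ t ∈ Ico 0 R, HasDerivWithinAt f (f' t) (Ico 0 R) t)
    (hf' : MonotoneOn f' (Ico 0 R)) (hf0 : f 0 = 0) {t : ℝ} (ht : 0 < t) (htR : t < R)
    (hft : f' t < 0) : 0 ≤ majorantRate f f' t := by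
  rw [majorantRate_eq ht hft]
  have := mul_deriv_sub_nonneg hf hf' hf0 ht.le htR
  have : 0 < -f' t := by linarith
  positivity

lemma mul_deriv_sub_le_majorantRate_mul
    (hf : ∀ t ∈ Ico 0 R, HasDerivWithinAt f (f' t) (Ico 0 R) t)
    (hconv : ConvexOn ℝ (Ico 0 R) f') (hf' : MonotoneOn f' (Ico 0 R)) (hf0 : f 0 = 0)
    {t δ : ℝ} (ht : 0 ≤ t) (htδ : t ≤ δ) (hδR : δ < R) (hfδ : f' δ < 0) :
    t * f' t - f t ≤ majorantRate f f' δ * (t * -f' t) := by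
  rcases ht.eq_or_lt with rfl | ht
  · simp [hf0]
  have hδ := ht.trans_le htδ
  have hq := majorantRate_nonneg hf hf' hf0 hδ hδR hfδ
  have hmono : f' t ≤ f' δ := hf' ⟨ht.le, htδ.trans_lt hδR⟩ ⟨hδ.le, hδR⟩ htδ
  calc t * f' t - f t = t * ((t * f' t - f t) / t) := by field_simp
    _ ≤ t * ((δ * f' δ - f δ) / δ) :=
        mul_le_mul_of_nonneg_left (mul_deriv_sub_div_le hf hconv hf' hf0 ht htδ hδR) ht.le
    _ = majorantRate f f' δ * (t * -f' δ) := by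
        have := hfδ.ne
        rw [majorantRate_eq hδ hfδ]; field_simp
    _ ≤ majorantRate f f' δ * (t * -f' t) := by gcongr

lemma majorantRate_le (hf : ∀ t ∈ Ico 0 R, HasDerivWithinAt f (f' t) (Ico 0 R) t)
    (hconv : ConvexOn ℝ (Ico 0 R) f') (hf' : MonotoneOn f' (Ico 0 R)) (hf0 : f 0 = 0)
    {t δ : ℝ} (ht : 0 < t) (htδ : t ≤ δ) (hδR : δ < R) (hfδ : f' δ < 0) :
    majorantRate f f' t ≤ majorantRate f f' δ := by
  have hft : f' t < 0 := (hf' ⟨ht.le, htδ.trans_lt hδR⟩ ⟨ht.le.trans htδ, hδR⟩ htδ).trans_lt hfδ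
  rw [majorantRate_eq ht hft, div_div, div_le_iff₀ (by nlinarith)]
  simpa [mul_comm] using mul_deriv_sub_le_majorantRate_mul hf hconv hf' hf0 ht.le htδ hδR hfδ

lemma deriv_neg_of_lt_sSup (hf' : MonotoneOn f' (Ico 0 R)) {u : ℝ} (hu : 0 ≤ u)
    (h : u < sSup {v | v ∈ Ico 0 R ∧ f' v < 0}) : f' u < 0 ∧ u < R := by
  obtain ⟨v, ⟨hv, hfv⟩, huv⟩ := exists_mem_gt_of_lt_sSup hu h
  exact ⟨(hf' ⟨hu, huv.trans hv.2⟩ hv huv.le).trans_lt hfv, huv.trans hv.2⟩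

end Majorant

lemma norm_newton_step_mul_le {H : Type*} [NormedAddCommGroup H] [InnerProductSpace ℝ H]
    {F : H → H} {F' : H → H →L[ℝ] H} {T : H → Set H} {xs x y : H} {C R : ℝ} {f f' : ℝ → ℝ}
    (hT : ∀ x y u v : H, u ∈ T y → v ∈ T x → 0 ≤ ⟪u - v, y - x⟫)
    (hxs : -F xs ∈ T xs) (hy : -(F x + F' x (y - x)) ∈ T y)
    (hC : 0 ≤ C) (hcoer : ∀ z, ‖z‖ ^ 2 ≤ C * ⟪F' xs z, z⟫)
    (hF : ∀ τ ∈ Icc (0 : ℝ) 1, HasFDerivAt F (F' (xs + τ • (x - xs))) (xs + τ • (x - xs)))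
    (hmaj : ∀ τ ∈ Icc (0 : ℝ) 1,
      C * ‖F' x - F' (xs + τ • (x - xs))‖ ≤ f' ‖x - xs‖ - f' (τ * ‖x - xs‖))
    (hf : ∀ t ∈ Ico 0 R, HasDerivWithinAt f (f' t) (Ico 0 R) t)
    (hf' : MonotoneOn f' (Ico 0 R)) (hf0 : f 0 = 0) (hf'0 : f' 0 = -1) (hxR : ‖x - xs‖ < R) :
    ‖y - xs‖ * -f' ‖x - xs‖ ≤ ‖x - xs‖ * f' ‖x - xs‖ - f ‖x - xs‖ := by
  set t := ‖x - xs‖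
  set e := y - xs
  have hrem : C * ‖F x - F xs - F' x (x - xs)‖ ≤ t * f' t - f t := by
    have := norm_sub_sub_le_of_majorant hC hF
      (fun τ hτ => hasDerivWithinAt_majorant_gap hf (norm_nonneg _) hxR hτ) fun τ hτ => by
        rw [norm_sub_rev, ← mul_assoc]
        exact mul_le_mul_of_nonneg_right (hmaj τ hτ) (norm_nonneg _)
    simpa [hf0] using this
  have hlin : C * ‖F' x - F' xs‖ ≤ f' t + 1 := by
    simpa [hf'0] using hmaj 0 (left_mem_Icc.2 zero_le_one)
  have hgap := mul_deriv_sub_nonneg hf hf' hf0 (norm_nonneg _) hxR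
  have hsq : ‖e‖ ^ 2 ≤ (f' t + 1) * ‖e‖ ^ 2 + (t * f' t - f t) * ‖e‖ :=
    calc ‖e‖ ^ 2 ≤ C * ⟪F' xs e, e⟫ := hcoer e
      _ ≤ C * (‖F' x - F' xs‖ * ‖e‖ ^ 2 + ‖F x - F xs - F' x (x - xs)‖ * ‖e‖) :=
          mul_le_mul_of_nonneg_left (inner_newton_error_le hT hxs hy) hC
      _ = C * ‖F' x - F' xs‖ * ‖e‖ ^ 2 + C * ‖F x - F xs - F' x (x - xs)‖ * ‖e‖ := by ring
      _ ≤ (f' t + 1) * ‖e‖ ^ 2 + (t * f' t - f t) * ‖e‖ := by gcongr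
  rcases (norm_nonneg e).eq_or_lt with he | he
  · rw [← he, zero_mul]
    exact hgap
  refine le_of_mul_le_mul_left ?_ he
  nlinarith

theorem newton_sequence_converges_general {H : Type*} [NormedAddCommGroup H] [InnerProductSpace ℝ H] [CompleteSpace H]
    (Ω : Set H) (F : H → H) (F' : H → H →L[ℝ] H)
    (hFd : ∀ x ∈ Ω, HasFDerivAt F (F' x) x)
    (xs : H)
    (T : H → Set H) (hT : IsMaximalMonotone T)
    (hsol : (0 : H) ∈ (fun w => F xs + w) '' T xs)
    (hpsd : ∀ y : H, 0 ≤ ⟪(F' xs) y, y⟫)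
    (Ahat : H →L[ℝ] H)
    (hAhat : Ahat = (1 / 2 : ℝ) • (F' xs + ContinuousLinearMap.adjoint (F' xs)))
    (Ginv : H →L[ℝ] H)
    (hGinv2 : Ahat.comp Ginv = ContinuousLinearMap.id ℝ H)
    (R : ℝ) (κ : ℝ)
    (hκ : κ = sSup {u : ℝ | u ∈ Set.Ico (0 : ℝ) R ∧ Metric.ball xs u ⊆ Ω})
    (f f' : ℝ → ℝ)
    (hfd1 : ∀ t ∈ Set.Ico (0 : ℝ) R, HasDerivWithinAt f (f' t) (Set.Ico (0 : ℝ) R) t)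
    (hf0 : f 0 = 0) (hf'0 : f' 0 = -1)
    (hfconv : ConvexOn ℝ (Set.Ico (0 : ℝ) R) f')
    (hfmono : StrictMonoOn f' (Set.Ico (0 : ℝ) R))
    (hmaj : ∀ τ ∈ Set.Icc (0 : ℝ) 1, ∀ x ∈ Metric.ball xs κ,
      ‖Ginv‖ * ‖F' x - F' (xs + τ • (x - xs))‖ ≤ f' ‖x - xs‖ - f' (τ * ‖x - xs‖))
    (ν : ℝ) (hν : ν = sSup {u : ℝ | u ∈ Set.Ico (0 : ℝ) R ∧ f' u < 0})
    (ρ : ℝ) (hρ : ρ = sSup {u : ℝ | u ∈ Set.Ioo (0 : ℝ) ν ∧ f u / (u * f' u) - 1 < 1})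
    (r : ℝ) (hr : r = min κ ρ)
    (xseq : ℕ → H) (hx0 : xseq 0 ∈ Metric.ball xs r)
    (hNewton : ∀ k : ℕ, (0 : H) ∈
      (fun w => F (xseq k) + (F' (xseq k)) (xseq (k + 1) - xseq k) + w) '' T (xseq (k + 1)))
    :
    (∀ k : ℕ, xseq k ∈ Metric.ball xs r) ∧
      Filter.Tendsto xseq Filter.atTop (nhds xs) := by
  subst hAhat hκ hν hρ hr
  have hf' := hfmono.monotoneOn
  obtain ⟨δ, hx0δ, hδr⟩ := exists_between (mem_ball.1 hx0)
  have hδ0 : 0 < δ := dist_nonneg.trans_lt hx0δ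
  obtain ⟨s, ⟨⟨-, hsν⟩, hs1⟩, hδs⟩ :=
    exists_mem_gt_of_lt_sSup hδ0.le (hδr.trans_le (min_le_right _ _))
  obtain ⟨hfs, hsR⟩ := deriv_neg_of_lt_sSup hf' (hδ0.le.trans hδs.le) hsν
  obtain ⟨hfδ, hδR⟩ := deriv_neg_of_lt_sSup hf' hδ0.le (hδs.trans hsν)
  have hc0 := majorantRate_nonneg hfd1 hf' hf0 hδ0 hδR hfδ
  have hc1 := (majorantRate_le hfd1 hfconv hf' hf0 hδ0 hδs.le hsR hfs).trans_lt hs1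
  have hstep : ∀ k, dist (xseq k) xs ≤ δ →
      dist (xseq (k + 1)) xs ≤ majorantRate f f' δ * dist (xseq k) xs := fun k hk => by
    simp only [dist_eq_norm] at hk ⊢
    have hxκ : xseq k ∈ ball xs _ :=
      mem_ball_iff_norm.2 (hk.trans_lt (hδr.trans_le (min_le_left _ _)))
    obtain ⟨hft, htR⟩ := deriv_neg_of_lt_sSup hf' (norm_nonneg _) (hk.trans_lt (hδs.trans hsν))
    have hnewton := norm_newton_step_mul_le hT.1 ((zero_mem_image_add_iff _ _).1 hsol)
      (by simpa [add_assoc] using (zero_mem_image_add_iff _ _).1 (hNewton k)) (norm_nonneg _)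
      (sq_norm_le_mul_inner hpsd hGinv2)
      (fun τ hτ => hFd _ (ball_sSup_subset Ω xs R
        ((convex_ball xs _).add_smul_sub_mem (mem_ball_self (dist_nonneg.trans_lt hxκ)) hxκ hτ)))
      (fun τ hτ => hmaj τ hτ _ hxκ) hfd1 hf' hf0 hf'0 htR
    have hrate :=
      mul_deriv_sub_le_majorantRate_mul hfd1 hfconv hf' hf0 (norm_nonneg _) hk hδR hfδ
    exact le_of_mul_le_mul_right (by linarith) (neg_pos.2 hft)
  have hdist := dist_le_pow_mul_of_contracting hc0 hc1.le hx0δ.le hstep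
  exact ⟨fun k => mem_ball.2 <| (hdist k).trans_lt <|
      (mul_le_of_le_one_left hδ0.le (pow_le_one₀ hc0 hc1.le)).trans_lt hδr,
    tendsto_of_dist_le_pow_mul hc0 hc1 hdist⟩

theorem newton_sequence_converges {H : Type*} [NormedAddCommGroup H] [InnerProductSpace ℝ H] [CompleteSpace H]
    (Ω : Set H) (hΩ : IsOpen Ω) (F : H → H) (F' : H → H →L[ℝ] H)
    (hFd : ∀ x ∈ Ω, HasFDerivAt F (F' x) x) (hF'c : ContinuousOn F' Ω)
    (xs : H) (hxs : xs ∈ Ω)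
    (T : H → Set H) (hT : IsMaximalMonotone T)
    (hsol : (0 : H) ∈ (fun w => F xs + w) '' T xs)
    (hpsd : ∀ y : H, 0 ≤ ⟪(F' xs) y, y⟫)
    (Ahat : H →L[ℝ] H)
    (hAhat : Ahat = (1 / 2 : ℝ) • (F' xs + ContinuousLinearMap.adjoint (F' xs)))
    (Ginv : H →L[ℝ] H)
    (hGinv1 : Ginv.comp Ahat = ContinuousLinearMap.id ℝ H)
    (hGinv2 : Ahat.comp Ginv = ContinuousLinearMap.id ℝ H)
    (R : ℝ) (hR : 0 < R) (κ : ℝ)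
    (hκ : κ = sSup {u : ℝ | u ∈ Set.Ico (0 : ℝ) R ∧ Metric.ball xs u ⊆ Ω})
    (f f' f'' : ℝ → ℝ)
    (hfd1 : ∀ t ∈ Set.Ico (0 : ℝ) R, HasDerivWithinAt f (f' t) (Set.Ico (0 : ℝ) R) t)
    (hfd2 : ∀ t ∈ Set.Ico (0 : ℝ) R, HasDerivWithinAt f' (f'' t) (Set.Ico (0 : ℝ) R) t)
    (hfc : ContinuousOn f'' (Set.Ico (0 : ℝ) R))
    (hf0 : f 0 = 0) (hf'0 : f' 0 = -1)
    (hfconv : ConvexOn ℝ (Set.Ico (0 : ℝ) R) f')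
    (hfmono : StrictMonoOn f' (Set.Ico (0 : ℝ) R))
    (hmaj : ∀ τ ∈ Set.Icc (0 : ℝ) 1, ∀ x ∈ Metric.ball xs κ,
      ‖Ginv‖ * ‖F' x - F' (xs + τ • (x - xs))‖ ≤ f' ‖x - xs‖ - f' (τ * ‖x - xs‖))
    (ν : ℝ) (hν : ν = sSup {u : ℝ | u ∈ Set.Ico (0 : ℝ) R ∧ f' u < 0})
    (ρ : ℝ) (hρ : ρ = sSup {u : ℝ | u ∈ Set.Ioo (0 : ℝ) ν ∧ f u / (u * f' u) - 1 < 1})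
    (r : ℝ) (hr : r = min κ ρ)
    (xseq : ℕ → H) (hx0 : xseq 0 ∈ Metric.ball xs r) (hx0ne : xseq 0 ≠ xs)
    (hNewton : ∀ k : ℕ, (0 : H) ∈
      (fun w => F (xseq k) + (F' (xseq k)) (xseq (k + 1) - xseq k) + w) '' T (xseq (k + 1)))
    :
    (∀ k : ℕ, xseq k ∈ Metric.ball xs r) ∧
      Filter.Tendsto xseq Filter.atTop (nhds xs) :=
  newton_sequence_converges_general Ω F F' hFd xs T hT hsol hpsd Ahat hAhat Ginv hGinv2 R κ hκ f f'
    hfd1 hf0 hf'0 hfconv hfmono hmaj ν hν ρ hρ r hr xseq hx0 hNewton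
end
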